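/- arXiv:1502.03590 — 5 statements merged into one kernel-verified Lean document; each statement's English description precedes it below -/
import Mathlib

section
/- Let n, p, w_p, w_o, y_p be positive even integers, and let A_p (n×n), C_p (y_p×n), K (n×y_p), B_p (n×w_p), B_o (n×w_o) be real matrices with D_p = [I_{y_p} 0] (y_p×w_p). Define the joint matrices A = [[A_p, 0],[K·C_p, A_p − K·C_p]] (2n×2n) and B = [[B_p, 0],[K·D_p, B_o]] (2n×(w_p+w_o)), and E_p = [I_n 0], E_o = [0 I_n] (n×2n). Assume A_p and A_p − K·C_p are Hurwitz. For a symmetric 2n×2n real matrix Σ₀, let Σ(t) be the solution of the Lyapunov matrix ODE Σ'(t) = A·Σ(t) + Σ(t)·Aᵀ + B·Bᵀ with Σ(0) = Σ₀. Then E_p·Σ(t)·E_pᵀ − E_o·Σ(t)·E_oᵀ → 0 as t → ∞ for every initial condition Σ₀ if and only if (E_o ⊗ E_o − E_p ⊗ E_p)·(I_{2n} ⊗ A + A ⊗ I_{2n})⁻¹·vec(B·Bᵀ) = 0. -/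
open Matrix MeasureTheory Filter
open scoped Kronecker

noncomputable section

/-- A real square matrix is Hurwitz if every eigenvalue of it, viewed as a complex matrix,
has strictly negative real part. -/
def IsHurwitz {ι : Type*} [Fintype ι] [DecidableEq ι] (M : Matrix ι ι ℝ) : Prop :=
  ∀ μ ∈ spectrum ℂ (M.map Complex.ofReal), μ.re < 0

/-- Column-stacking vectorization of a matrix: `vecM M (j, i) = M i j`. -/
def vecM {m n : Type*} (M : Matrix m n ℝ) : n × m → ℝ := fun p => M p.2 p.1

open NormedSpace Topology
open scoped Nat

/-!
The joint matrix `A` is block triangular with Hurwitz diagonal blocks, hence Hurwitz, and a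
Hurwitz matrix has `exp (t • A) → 0`: over `ℂ` every vector is a sum of generalized
eigenvectors, and on such a vector `exp (t • A)` acts as `e^{tμ}` times a polynomial in `t`.
Consequently `A X + X Aᵀ = 0` forces `X = 0` (conjugating by `exp (t • A)` fixes `X` and sends it
to `0`), so `I ⊗ A + A ⊗ I`, which is `X ↦ A X + X Aᵀ` in vectorized form, is invertible, and
the condition on the right says `E_o P E_oᵀ = E_p P E_pᵀ` for the unique steady state `P` with
`A P + P Aᵀ + B Bᵀ = 0`. Every solution of the Lyapunov ODE satisfies
`Σ(t) - P = exp (t • A) (Σ₀ - P) exp (t • A)ᵀ → 0`, so the difference of the two blocks tends to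
`E_p P E_pᵀ - E_o P E_oᵀ`; the constant solution `Σ ≡ P` shows that this limit must vanish.
-/

lemma tendsto_cexp_mul_mul_pow {μ : ℂ} (hμ : μ.re < 0) (m : ℕ) :
    Tendsto (fun t : ℝ => Complex.exp (t * μ) * (t : ℂ) ^ m) atTop (𝓝 0) := by
  rw [tendsto_zero_iff_norm_tendsto_zero]
  refine (tendsto_rpow_mul_exp_neg_mul_atTop_nhds_zero m (-μ.re) (by linarith)).congr' ?_
  filter_upwards [eventually_ge_atTop (0 : ℝ)] with t ht
  rw [norm_mul, Complex.norm_exp, norm_pow, Complex.norm_real, Real.norm_of_nonneg ht,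
    Real.rpow_natCast, mul_comm]
  simp [mul_comm]

section MatrixExp

variable {ι : Type*} [Fintype ι] [DecidableEq ι]

lemma exp_smul_eq_cexp_smul_exp_smul_sub (M : Matrix ι ι ℂ) (μ : ℂ) (t : ℝ) :
    exp (t • M) = Complex.exp (t * μ) • exp (t • (M - μ • 1)) := by
  have hsplit : t • M = diagonal (fun _ => (t * μ : ℂ)) + t • (M - μ • 1) := by
    rw [← smul_one_eq_diagonal, smul_sub, ← smul_assoc, Complex.real_smul]
    abel
  have hcomm : Commute (diagonal (fun _ => (t * μ : ℂ))) (t • (M - μ • 1)) := by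
    rw [← smul_one_eq_diagonal]
    exact (Commute.one_left _).smul_left _
  rw [hsplit, Matrix.exp_add_of_commute _ _ hcomm, exp_diagonal, Pi.exp_def,
    ← Complex.exp_eq_exp_ℂ, ← smul_one_eq_diagonal, smul_mul, one_mul]

attribute [local instance] Matrix.linftyOpNormedRing Matrix.linftyOpNormedAlgebra in
lemma exp_smul_mulVec_eq_sum_range {N : Matrix ι ι ℂ} {v : ι → ℂ} {k : ℕ}
    (hv : N ^ k *ᵥ v = 0) (t : ℝ) :
    exp (t • N) *ᵥ v = ∑ m ∈ Finset.range k, ((m ! : ℂ)⁻¹ * (t : ℂ) ^ m) • (N ^ m *ᵥ v) := by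
  have hsum := (exp_series_hasSum_exp' (𝕂 := ℂ) (t • N)).map (mulVec.addMonoidHomLeft v)
    (continuous_id.matrix_mulVec continuous_const)
  have hterm : ∀ m : ℕ, mulVec.addMonoidHomLeft v ((m ! : ℂ)⁻¹ • (t • N) ^ m)
      = ((m ! : ℂ)⁻¹ * (t : ℂ) ^ m) • (N ^ m *ᵥ v) := by
    intro m
    rw [← Complex.coe_smul, smul_pow, smul_smul]
    exact smul_mulVec _ _ _
  have hvanish : ∀ m ∉ Finset.range k, ((m ! : ℂ)⁻¹ * (t : ℂ) ^ m) • (N ^ m *ᵥ v) = 0 := by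
    intro m hm
    have hkm : k ≤ m := not_lt.mp (Finset.mem_range.not.mp hm)
    rw [← Nat.sub_add_cancel hkm, pow_add N, ← mulVec_mulVec, hv, mulVec_zero, smul_zero]
  simp only [Function.comp_def, hterm] at hsum
  exact hsum.unique (hasSum_sum_of_ne_finset_zero hvanish)

lemma tendsto_exp_smul_mulVec_of_pow_sub_mulVec_eq_zero {M : Matrix ι ι ℂ} {μ : ℂ}
    (hμ : μ.re < 0) {v : ι → ℂ} {k : ℕ} (hv : (M - μ • 1) ^ k *ᵥ v = 0) :
    Tendsto (fun t : ℝ => exp (t • M) *ᵥ v) atTop (𝓝 0) := by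
  have hexp : ∀ t : ℝ, exp (t • M) *ᵥ v = ∑ m ∈ Finset.range k,
      ((Complex.exp (t * μ) * (t : ℂ) ^ m) * (m ! : ℂ)⁻¹) • ((M - μ • 1) ^ m *ᵥ v) := by
    intro t
    rw [exp_smul_eq_cexp_smul_exp_smul_sub M μ t, smul_mulVec, exp_smul_mulVec_eq_sum_range hv,
      Finset.smul_sum]
    refine Finset.sum_congr rfl fun m _ => ?_
    rw [smul_smul]
    congr 1
    ring
  simp only [hexp]
  simpa using tendsto_finsetSum (Finset.range k) fun m _ =>
    ((tendsto_cexp_mul_mul_pow hμ m).mul_const (m ! : ℂ)⁻¹).smul_const ((M - μ • 1) ^ m *ᵥ v)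

lemma tendsto_exp_smul_mulVec_of_spectrum_re_neg {M : Matrix ι ι ℂ}
    (hM : ∀ μ ∈ spectrum ℂ M, μ.re < 0) (v : ι → ℂ) :
    Tendsto (fun t : ℝ => exp (t • M) *ᵥ v) atTop (𝓝 0) := by
  have hv : v ∈ ⨆ μ, Module.End.maxGenEigenspace (toLinAlgEquiv' M) μ := by
    rw [Module.End.iSup_maxGenEigenspace_eq_top]
    trivial
  induction hv using Submodule.iSup_induction' with
  | mem μ v hv =>
    obtain ⟨k, hk⟩ := (Module.End.mem_maxGenEigenspace _ _ _).mp hv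
    have hvec : (M - μ • 1) ^ k *ᵥ v = 0 := by
      rwa [← toLinAlgEquiv'_apply, map_pow, map_sub, map_smul, map_one]
    by_cases hμ : μ ∈ spectrum ℂ M
    · exact tendsto_exp_smul_mulVec_of_pow_sub_mulVec_eq_zero (hM μ hμ) hvec
    · have hunit : IsUnit ((M - μ • 1) ^ k) := by
        rw [spectrum.notMem_iff, ← IsUnit.neg_iff, neg_sub, Algebra.algebraMap_eq_smul_one] at hμ
        exact hμ.pow k
      rw [← mulVec_zero ((M - μ • 1) ^ k)] at hvec
      rw [mulVec_injective_iff_isUnit.mpr hunit hvec]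
      simp
  | zero => simp
  | add x y _ _ hx hy => simpa [mulVec_add] using hx.add hy

lemma tendsto_exp_smul_of_spectrum_re_neg {M : Matrix ι ι ℂ}
    (hM : ∀ μ ∈ spectrum ℂ M, μ.re < 0) :
    Tendsto (fun t : ℝ => exp (t • M)) atTop (𝓝 0) := by
  refine tendsto_pi_nhds.mpr fun i => tendsto_pi_nhds.mpr fun j => ?_
  simpa [mulVec_single] using
    tendsto_pi_nhds.mp (tendsto_exp_smul_mulVec_of_spectrum_re_neg hM (Pi.single j 1)) i

attribute [local instance] Matrix.linftyOpNormedRing Matrix.linftyOpNormedAlgebra in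
lemma map_ofReal_exp (X : Matrix ι ι ℝ) :
    (exp X).map Complex.ofReal = exp (X.map Complex.ofReal) :=
  map_exp (Complex.ofRealHom.mapMatrix (m := ι))
    (continuous_id.matrix_map Complex.continuous_ofReal) X

theorem IsHurwitz.tendsto_exp_smul {M : Matrix ι ι ℝ} (hM : IsHurwitz M) :
    Tendsto (fun t : ℝ => exp (t • M)) atTop (𝓝 0) := by
  have h := ((continuous_id.matrix_map Complex.continuous_re).tendsto 0).comp
    (tendsto_exp_smul_of_spectrum_re_neg hM)
  refine (h.congr fun t => ?_).trans (by simp)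
  have hsmul : t • M.map Complex.ofReal = (t • M).map Complex.ofReal := by ext; simp
  simp only [Function.comp_apply, id, hsmul, ← map_ofReal_exp, Matrix.map_map]
  ext i j
  simp

end MatrixExp

theorem IsHurwitz.fromBlocks_zero₁₂ {m n : Type*} [Fintype m] [DecidableEq m] [Fintype n]
    [DecidableEq n] {A : Matrix m m ℝ} {C : Matrix n m ℝ} {D : Matrix n n ℝ}
    (hA : IsHurwitz A) (hD : IsHurwitz D) : IsHurwitz (fromBlocks A 0 C D) := by
  intro μ hμ
  rw [fromBlocks_map, Matrix.map_zero _ Complex.ofReal_zero, mem_spectrum_iff_isRoot_charpoly,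
    charpoly_fromBlocks_zero₁₂, Polynomial.IsRoot, Polynomial.eval_mul, _root_.mul_eq_zero] at hμ
  rcases hμ with h | h
  · exact hA μ (mem_spectrum_iff_isRoot_charpoly.mpr h)
  · exact hD μ (mem_spectrum_iff_isRoot_charpoly.mpr h)

lemma hasDerivAt_matrix_mul_apply {l m n : Type*} [Fintype m] {X : ℝ → Matrix l m ℝ}
    {Y : ℝ → Matrix m n ℝ} {X' : Matrix l m ℝ} {Y' : Matrix m n ℝ} {t : ℝ}
    (hX : ∀ i j, HasDerivAt (fun s => X s i j) (X' i j) t)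
    (hY : ∀ i j, HasDerivAt (fun s => Y s i j) (Y' i j) t) (i : l) (j : n) :
    HasDerivAt (fun s => (X s * Y s) i j) ((X' * Y t + X t * Y') i j) t := by
  simp only [mul_apply, Matrix.add_apply, ← Finset.sum_add_distrib]
  exact HasDerivAt.fun_sum fun k _ => (hX i k).fun_mul (hY k j)

section Lyapunov

variable {ι : Type*} [Fintype ι] [DecidableEq ι]

attribute [local instance] Matrix.linftyOpNormedRing Matrix.linftyOpNormedAlgebra in
lemma hasDerivAt_exp_smul_apply (A : Matrix ι ι ℝ) (t : ℝ) (i j : ι) :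
    HasDerivAt (fun u : ℝ => exp (u • A) i j) ((A * exp (t • A)) i j) t :=
  (entryLinearMap ℝ ℝ i j).toContinuousLinearMap.hasFDerivAt.comp_hasDerivAt t
    (hasDerivAt_exp_smul_const' A t)

lemma hasDerivAt_exp_neg_smul_apply (A : Matrix ι ι ℝ) (t : ℝ) (i j : ι) :
    HasDerivAt (fun u : ℝ => exp ((-u) • A) i j) (-(A * exp ((-t) • A)) i j) t :=
  ((hasDerivAt_exp_smul_apply A (-t) i j).comp t (hasDerivAt_neg t)).congr_deriv (by simp)

lemma exp_smul_mul_exp_neg_smul (A : Matrix ι ι ℝ) (t : ℝ) :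
    exp (t • A) * exp ((-t) • A) = 1 := by
  rw [← Matrix.exp_add_of_commute _ _ (((Commute.refl A).smul_left t).smul_right (-t)),
    ← add_smul, add_neg_cancel, zero_smul, exp_zero]

theorem eq_exp_smul_mul_mul_transpose_of_hasDerivAt {A : Matrix ι ι ℝ} {D : ℝ → Matrix ι ι ℝ}
    (hD : ∀ t i j, HasDerivAt (fun s => D s i j) ((A * D t + D t * Aᵀ) i j) t) (t : ℝ) :
    D t = exp (t • A) * D 0 * (exp (t • A))ᵀ := by
  set E : ℝ → Matrix ι ι ℝ := fun u => exp ((-u) • A)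
  have hderiv : ∀ u i j, HasDerivAt (fun s => (E s * D s * (E s)ᵀ) i j) 0 u := by
    intro u i j
    have hcomm : A * E u = E u * A := ((Commute.refl A).smul_right (-u)).exp_right
    have hzero : (-(A * E u) * D u + E u * (A * D u + D u * Aᵀ)) * (E u)ᵀ
        + E u * D u * (-(A * E u))ᵀ = 0 := by
      rw [hcomm, transpose_neg, transpose_mul]
      noncomm_ring
    have h := hasDerivAt_matrix_mul_apply
      (hasDerivAt_matrix_mul_apply (hasDerivAt_exp_neg_smul_apply A u) (hD u))
      (fun a b => hasDerivAt_exp_neg_smul_apply A u b a) i j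
    exact h.congr_deriv (congrFun (congrFun hzero i) j)
  have hconst : E t * D t * (E t)ᵀ = D 0 := by
    ext i j
    have h := is_const_of_deriv_eq_zero (fun s => (hderiv s i j).differentiableAt)
      (fun s => (hderiv s i j).deriv) t 0
    simpa [E] using h
  have hinv : exp (t • A) * E t = 1 := exp_smul_mul_exp_neg_smul A t
  calc D t = (exp (t • A) * E t) * D t * (exp (t • A) * E t)ᵀ := by simp [hinv]
    _ = exp (t • A) * (E t * D t * (E t)ᵀ) * (exp (t • A))ᵀ := by
      simp only [transpose_mul, Matrix.mul_assoc]
    _ = exp (t • A) * D 0 * (exp (t • A))ᵀ := by rw [hconst]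

end Lyapunov
section Stability

variable {ι : Type*} [Fintype ι] [DecidableEq ι] {A : Matrix ι ι ℝ}

theorem IsHurwitz.tendsto_exp_smul_mul_mul_transpose (hA : IsHurwitz A) (R : Matrix ι ι ℝ) :
    Tendsto (fun t : ℝ => exp (t • A) * R * (exp (t • A))ᵀ) atTop (𝓝 0) := by
  have hT := (continuous_id.matrix_transpose.tendsto 0).comp hA.tendsto_exp_smul
  simpa using (hA.tendsto_exp_smul.mul_const R).mul hT

theorem IsHurwitz.eq_zero_of_mul_add_mul_transpose_eq_zero (hA : IsHurwitz A)
    {X : Matrix ι ι ℝ} (hX : A * X + X * Aᵀ = 0) : X = 0 := by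
  have hsol := eq_exp_smul_mul_mul_transpose_of_hasDerivAt (A := A) (D := fun _ => X)
    fun t i j => by rw [hX]; exact hasDerivAt_const t (X i j)
  exact tendsto_nhds_unique tendsto_const_nhds
    ((hA.tendsto_exp_smul_mul_mul_transpose X).congr fun t => (hsol t).symm)

theorem IsHurwitz.isSymm_of_mul_add_mul_transpose_add_eq_zero (hA : IsHurwitz A)
    {P Q : Matrix ι ι ℝ} (hQ : Q.IsSymm) (hP : A * P + P * Aᵀ + Q = 0) : P.IsSymm := by
  have hPt : A * Pᵀ + Pᵀ * Aᵀ + Q = 0 := by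
    simpa [transpose_mul, hQ.eq, add_comm (A * Pᵀ)] using congrArg transpose hP
  refine sub_eq_zero.mp (hA.eq_zero_of_mul_add_mul_transpose_eq_zero ?_)
  rw [mul_sub, sub_mul, ← sub_eq_zero.mpr (hPt.trans hP.symm)]
  abel

theorem IsHurwitz.tendsto_of_hasDerivAt_lyapunov (hA : IsHurwitz A) {P Q : Matrix ι ι ℝ}
    (hP : A * P + P * Aᵀ + Q = 0) {S : ℝ → Matrix ι ι ℝ}
    (hS : ∀ t i j, HasDerivAt (fun s => S s i j) ((A * S t + S t * Aᵀ + Q) i j) t) :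
    Tendsto S atTop (𝓝 P) := by
  have hD : ∀ t i j, HasDerivAt (fun s => (S s - P) i j)
      ((A * (S t - P) + (S t - P) * Aᵀ) i j) t := by
    intro t i j
    have hrhs : A * (S t - P) + (S t - P) * Aᵀ = A * S t + S t * Aᵀ + Q := by
      rw [eq_neg_of_add_eq_zero_right hP]
      noncomm_ring
    rw [hrhs]
    exact (hS t i j).sub_const (P i j)
  rw [← tendsto_sub_nhds_zero_iff]
  exact (hA.tendsto_exp_smul_mul_mul_transpose (S 0 - P)).congr fun t =>
    (eq_exp_smul_mul_mul_transpose_of_hasDerivAt hD t).symm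

theorem IsHurwitz.forall_lyapunov_tendsto_sub_iff {κ : Type*} (hA : IsHurwitz A)
    {P Q : Matrix ι ι ℝ} (hQ : Q.IsSymm) (hP : A * P + P * Aᵀ + Q = 0) (E F : Matrix κ ι ℝ) :
    (∀ S₀ : Matrix ι ι ℝ, S₀.IsSymm → ∀ S : ℝ → Matrix ι ι ℝ, S 0 = S₀ →
      (∀ t i j, HasDerivAt (fun s => S s i j) ((A * S t + S t * Aᵀ + Q) i j) t) →
      ∀ i j, Tendsto (fun t => (E * S t * Eᵀ - F * S t * Fᵀ) i j) atTop (𝓝 0))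
    ↔ E * P * Eᵀ = F * P * Fᵀ := by
  have hlim : ∀ S : ℝ → Matrix ι ι ℝ,
      (∀ t i j, HasDerivAt (fun s => S s i j) ((A * S t + S t * Aᵀ + Q) i j) t) →
      Tendsto (fun t => E * S t * Eᵀ - F * S t * Fᵀ) atTop (𝓝 (E * P * Eᵀ - F * P * Fᵀ)) :=
    fun S hS =>
      ((by fun_prop : Continuous fun X : Matrix ι ι ℝ => E * X * Eᵀ - F * X * Fᵀ).tendsto P).comp
        (hA.tendsto_of_hasDerivAt_lyapunov hP hS)
  constructor
  · intro h
    have hconst : ∀ t i j, HasDerivAt (fun _ : ℝ => P i j) ((A * P + P * Aᵀ + Q) i j) t :=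
      fun t i j => by rw [hP]; exact hasDerivAt_const t (P i j)
    refine sub_eq_zero.mp (tendsto_nhds_unique (hlim _ hconst) ?_)
    exact tendsto_pi_nhds.mpr fun i => tendsto_pi_nhds.mpr
      (h P (hA.isSymm_of_mul_add_mul_transpose_add_eq_zero hQ hP) _ rfl hconst i)
  · intro h _ _ S _ hS i j
    have hS' := hlim S hS
    rw [h, sub_self] at hS'
    exact tendsto_pi_nhds.mp (tendsto_pi_nhds.mp hS' i) j

end Stability

section Vectorization

lemma vecM_injective {m n : Type*} : Function.Injective (vecM : Matrix m n ℝ → n × m → ℝ) :=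
  fun _ _ h => Matrix.ext fun i j => congrFun h (j, i)

lemma vecM_surjective {m n : Type*} : Function.Surjective (vecM : Matrix m n ℝ → n × m → ℝ) :=
  fun v => ⟨Matrix.of fun i j => v (j, i), rfl⟩

lemma kronecker_mulVec_vecM {l m o q : Type*} [Fintype m] [Fintype q] (P : Matrix l m ℝ)
    (Q : Matrix o q ℝ) (X : Matrix q m ℝ) : (P ⊗ₖ Q) *ᵥ vecM X = vecM (Q * X * Pᵀ) := by
  ext ⟨a, b⟩
  simp only [mulVec, dotProduct, vecM, kroneckerMap_apply, mul_apply, transpose_apply,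
    Fintype.sum_prod_type, Finset.sum_mul]
  exact Finset.sum_congr rfl fun c _ => Finset.sum_congr rfl fun d _ => by ring

variable {ι : Type*} [Fintype ι] [DecidableEq ι]

lemma one_kronecker_add_kronecker_one_mulVec_vecM (A X : Matrix ι ι ℝ) :
    ((1 : Matrix ι ι ℝ) ⊗ₖ A + A ⊗ₖ (1 : Matrix ι ι ℝ)) *ᵥ vecM X = vecM (A * X + X * Aᵀ) := by
  rw [add_mulVec, kronecker_mulVec_vecM, kronecker_mulVec_vecM, transpose_one, Matrix.mul_one,
    Matrix.one_mul]
  rfl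

theorem IsHurwitz.isUnit_det_one_kronecker_add_kronecker_one {A : Matrix ι ι ℝ}
    (hA : IsHurwitz A) : IsUnit ((1 : Matrix ι ι ℝ) ⊗ₖ A + A ⊗ₖ (1 : Matrix ι ι ℝ)).det := by
  rw [← isUnit_iff_isUnit_det, ← mulVec_injective_iff_isUnit]
  intro v w hvw
  obtain ⟨X, rfl⟩ := vecM_surjective v
  obtain ⟨Y, rfl⟩ := vecM_surjective w
  simp only [one_kronecker_add_kronecker_one_mulVec_vecM] at hvw
  have hXY := hA.eq_zero_of_mul_add_mul_transpose_eq_zero (X := X - Y) (by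
    rw [mul_sub, sub_mul, sub_add_sub_comm, vecM_injective hvw, sub_self])
  rw [sub_eq_zero.mp hXY]

end Vectorization

theorem covariance_tracking_condition_general
    (n wp wo yp : ℕ)
    (Ap : Matrix (Fin n) (Fin n) ℝ) (Cp : Matrix (Fin yp) (Fin n) ℝ)
    (K : Matrix (Fin n) (Fin yp) ℝ)
    (A : Matrix (Fin n ⊕ Fin n) (Fin n ⊕ Fin n) ℝ)
    (hA : A = Matrix.fromBlocks Ap 0 (K * Cp) (Ap - K * Cp))
    (B : Matrix (Fin n ⊕ Fin n) (Fin wp ⊕ Fin wo) ℝ)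
    (Ep Eo : Matrix (Fin n) (Fin n ⊕ Fin n) ℝ)
    (hHp : IsHurwitz Ap) (hHo : IsHurwitz (Ap - K * Cp)) :
    (∀ Sig0 : Matrix (Fin n ⊕ Fin n) (Fin n ⊕ Fin n) ℝ, Sig0.IsSymm →
      ∀ S : ℝ → Matrix (Fin n ⊕ Fin n) (Fin n ⊕ Fin n) ℝ, S 0 = Sig0 →
        (∀ t : ℝ, ∀ i j, HasDerivAt (fun s => S s i j) ((A * S t + S t * Aᵀ + B * Bᵀ) i j) t) →
        ∀ i j, Tendsto (fun t => (Ep * S t * Epᵀ - Eo * S t * Eoᵀ) i j) atTop (nhds 0))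
    ↔ (Eo ⊗ₖ Eo - Ep ⊗ₖ Ep) *ᵥ
        (((1 : Matrix (Fin n ⊕ Fin n) (Fin n ⊕ Fin n) ℝ) ⊗ₖ A
          + A ⊗ₖ (1 : Matrix (Fin n ⊕ Fin n) (Fin n ⊕ Fin n) ℝ))⁻¹ *ᵥ vecM (B * Bᵀ)) = 0 := by
  have hAH : IsHurwitz A := hA ▸ hHp.fromBlocks_zero₁₂ hHo
  obtain ⟨Y, hY⟩ := vecM_surjective (((1 : Matrix (Fin n ⊕ Fin n) (Fin n ⊕ Fin n) ℝ) ⊗ₖ A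
    + A ⊗ₖ (1 : Matrix (Fin n ⊕ Fin n) (Fin n ⊕ Fin n) ℝ))⁻¹ *ᵥ vecM (B * Bᵀ))
  have hYeq : A * Y + Y * Aᵀ = B * Bᵀ := vecM_injective <| by
    rw [← one_kronecker_add_kronecker_one_mulVec_vecM, hY, mulVec_mulVec,
      mul_nonsing_inv _ hAH.isUnit_det_one_kronecker_add_kronecker_one, one_mulVec]
  have hP : A * -Y + -Y * Aᵀ + B * Bᵀ = 0 := by
    rw [← hYeq]
    noncomm_ring
  have hQ : (B * Bᵀ).IsSymm := by rw [IsSymm, transpose_mul, transpose_transpose]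
  refine (hAH.forall_lyapunov_tendsto_sub_iff hQ hP Ep Eo).trans ?_
  rw [← hY, sub_mulVec, kronecker_mulVec_vecM, kronecker_mulVec_vecM, sub_eq_zero,
    vecM_injective.eq_iff]
  simp only [Matrix.mul_neg, Matrix.neg_mul, neg_inj, eq_comm]

/-- Time-domain covariance-tracking condition (Theorem 1, condition 2):
for a Hurwitz joint plant–observer matrix, the plant and observer covariance blocks of every
solution of the Lyapunov ODE converge to each other iff the Kronecker-vectorized condition
`(E_o ⊗ E_o − E_p ⊗ E_p)·(I ⊗ A + A ⊗ I)⁻¹·vec(B·Bᵀ) = 0` holds. -/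
theorem covariance_tracking_condition
    (n p wp wo yp : ℕ)
    (hn : Even n) (hn0 : 0 < n) (hp : Even p) (hp0 : 0 < p)
    (hwp : Even wp) (hwp0 : 0 < wp) (hwo : Even wo) (hwo0 : 0 < wo)
    (hyp : Even yp) (hyp0 : 0 < yp) (hypwp : yp ≤ wp)
    (Ap : Matrix (Fin n) (Fin n) ℝ) (Cp : Matrix (Fin yp) (Fin n) ℝ)
    (K : Matrix (Fin n) (Fin yp) ℝ) (Bp : Matrix (Fin n) (Fin wp) ℝ)
    (Bo : Matrix (Fin n) (Fin wo) ℝ)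
    (Dp : Matrix (Fin yp) (Fin wp) ℝ)
    (hDp : Dp = Matrix.of fun (i : Fin yp) (j : Fin wp) => if (j : ℕ) = (i : ℕ) then (1 : ℝ) else 0)
    (A : Matrix (Fin n ⊕ Fin n) (Fin n ⊕ Fin n) ℝ)
    (hA : A = Matrix.fromBlocks Ap 0 (K * Cp) (Ap - K * Cp))
    (B : Matrix (Fin n ⊕ Fin n) (Fin wp ⊕ Fin wo) ℝ)
    (hB : B = Matrix.fromBlocks Bp 0 (K * Dp) Bo)
    (Ep Eo : Matrix (Fin n) (Fin n ⊕ Fin n) ℝ)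
    (hEp : Ep = Matrix.of fun i j =>
      Sum.elim (fun j' => if i = j' then (1 : ℝ) else 0) (fun _ => 0) j)
    (hEo : Eo = Matrix.of fun i j =>
      Sum.elim (fun _ => (0 : ℝ)) (fun j' => if i = j' then 1 else 0) j)
    (hHp : IsHurwitz Ap) (hHo : IsHurwitz (Ap - K * Cp)) :
    (∀ Sig0 : Matrix (Fin n ⊕ Fin n) (Fin n ⊕ Fin n) ℝ, Sig0.IsSymm →
      ∀ S : ℝ → Matrix (Fin n ⊕ Fin n) (Fin n ⊕ Fin n) ℝ, S 0 = Sig0 →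
        (∀ t : ℝ, ∀ i j, HasDerivAt (fun s => S s i j) ((A * S t + S t * Aᵀ + B * Bᵀ) i j) t) →
        ∀ i j, Tendsto (fun t => (Ep * S t * Epᵀ - Eo * S t * Eoᵀ) i j) atTop (nhds 0))
    ↔ (Eo ⊗ₖ Eo - Ep ⊗ₖ Ep) *ᵥ
        (((1 : Matrix (Fin n ⊕ Fin n) (Fin n ⊕ Fin n) ℝ) ⊗ₖ A
          + A ⊗ₖ (1 : Matrix (Fin n ⊕ Fin n) (Fin n ⊕ Fin n) ℝ))⁻¹ *ᵥ vecM (B * Bᵀ)) = 0 :=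
  covariance_tracking_condition_general n wp wo yp Ap Cp K A hA B Ep Eo hHp hHo
end
end

section
/- Let n, y_p, w_p, w_o be positive even integers with w_o ≥ 2n, and let A_p (n×n), C_p (y_p×n), K (n×y_p), B_p (n×w_p), X (n×n) be real matrices. Write Θ = Θ_n and define the complex n×n matrix N = −(i/4)·Θ·(A_p − K·C_p) − (i/4)·(A_p − K·C_p)ᵀ·Θ + (i/4)·Θ·K·Θ_{y_p}·Kᵀ·Θ − (1/4)·Θ·K·C_p·X·Θ − (1/4)·Θ·Xᵀ·(K·C_p)ᵀ·Θ − (1/4)·Θ·B_p·B_pᵀ·Θ + (1/4)·Θ·K·Kᵀ·Θ. Then N is Hermitian, and the following are equivalent: (i) N is positive semidefinite; (ii) there exists a complex (w_o/2)×n matrix Λ_o with Λ_o†·Λ_o = N. Moreover, for any such Λ_o, the matrix B_o := 2i·Θ·[−Λ_o† Λ_oᵀ]·Γ_{w_o} (where [−Λ_o† Λ_oᵀ] is the n×w_o horizontal concatenation) has all real entries and satisfies both B_o·B_oᵀ = K·C_p·X + Xᵀ·(K·C_p)ᵀ + B_p·B_pᵀ − K·Kᵀ and B_o·Θ_{w_o}·B_oᵀ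 = −(A_p − K·C_p)·Θ − Θ·(A_p − K·C_p)ᵀ − K·Θ_{y_p}·Kᵀ. -/
open Matrix
open scoped Kronecker ComplexConjugate ComplexOrder

noncomputable section

/-- For an even positive integer `m`, `Theta R m` is the `m × m` block-diagonal matrix
`I_{m/2} ⊗ J` with `J = [[0,1],[-1,0]]`, written entrywise. -/
def Theta (R : Type*) [Ring R] (m : ℕ) : Matrix (Fin m) (Fin m) R :=
  Matrix.of fun i j =>
    if (i : ℕ) % 2 = 0 ∧ (j : ℕ) = (i : ℕ) + 1 then 1
    else if (j : ℕ) % 2 = 0 ∧ (i : ℕ) = (j : ℕ) + 1 then -1 else 0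

/-- The `m × m` permutation matrix `P_m` sending `(a₁, …, a_m)` to
`(a₁, a₃, …, a_{m−1}, a₂, a₄, …, a_m)` (for `m` even). -/
def Pmat (m : ℕ) : Matrix (Fin m) (Fin m) ℂ :=
  Matrix.of fun i j =>
    if ((i : ℕ) < m / 2 ∧ (j : ℕ) = 2 * (i : ℕ))
        ∨ (m / 2 ≤ (i : ℕ) ∧ (j : ℕ) = 2 * ((i : ℕ) - m / 2) + 1) then 1 else 0

/-- The block-diagonal matrix `I_{m/2} ⊗ M` with `M = (1/2)·[[1, i],[1, −i]]`
(for `m` even), written entrywise. -/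
def blockM (m : ℕ) : Matrix (Fin m) (Fin m) ℂ :=
  Matrix.of fun i j =>
    if (i : ℕ) / 2 = (j : ℕ) / 2 then
      (if (j : ℕ) % 2 = 0 then (1 / 2 : ℂ)
       else if (i : ℕ) % 2 = 0 then Complex.I / 2 else -(Complex.I / 2))
    else 0

/-- `Γ_m = P_m·(I_{m/2} ⊗ M)`. -/
def Gamma (m : ℕ) : Matrix (Fin m) (Fin m) ℂ := Pmat m * blockM m

/-- Horizontal concatenation of two `n × h` matrices into an `n × 2h` matrix. -/
def hconcat {n h : ℕ} (X Y : Matrix (Fin n) (Fin h) ℂ) : Matrix (Fin n) (Fin (2 * h)) ℂ :=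
  Matrix.of fun i j =>
    if hj : (j : ℕ) < h then X i ⟨j, hj⟩
    else Y i ⟨(j : ℕ) - h, by have := j.isLt; omega⟩

/-- Entrywise complexification of a real matrix. -/
def cmap {m n : Type*} (M : Matrix m n ℝ) : Matrix m n ℂ := M.map Complex.ofReal

/-!
Index `Fin (2h)` by pairs `(s, c) : Fin 2 × Fin h` in two ways: interleaved, `s + 2c`, and in
blocks, `c + h s`. In interleaved coordinates `Θ_{2h}` and `I_h ⊗ M` are the Kronecker products
`J ⊗ 1` and `M ⊗ 1`, and `P` turns interleaved into block coordinates, in which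
`L = [−Λ† Λᵀ]` is the block row `(−Λ†, Λᵀ)`. So `L Γ Γᵀ Lᵀ` and `L Γ Θ Γᵀ Lᵀ` come from the
`2 × 2` identities `M Mᵀ = σ/2` and `M J Mᵀ = −(i/2) J` (`σ` the swap): they equal
`−(N + Nᵀ)/2` and `(i/2)(N − Nᵀ)` for `N = Λ†Λ`, and `conj M = σ M` makes `B_o` real.
On the other side `N = Θᵀ (R + iD) Θ / 4`, where `R` is the (real symmetric) right-hand side of
the covariance equation and `D` the (real antisymmetric) one of the realizability equation;
as `Θ` is orthogonal, `Θ (N + Nᵀ) Θᵀ = R/2` and `Θ (N − Nᵀ) Θᵀ = iD/2`.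
A positive semidefinite `N` is `B†B` for a square `B`, which zero rows pad to `h ≥ n` rows.
-/

lemma Theta_transpose (R : Type*) [Ring R] (m : ℕ) : (Theta R m)ᵀ = -Theta R m := by
  ext i j
  simp only [Theta, transpose_apply, of_apply, Matrix.neg_apply]
  split_ifs <;> first | omega | simp

section cmap
variable {l m n : Type*}

lemma cmap_add (A B : Matrix m n ℝ) : cmap (A + B) = cmap A + cmap B :=
  Matrix.map_add _ Complex.ofReal_add A B

lemma cmap_sub (A B : Matrix m n ℝ) : cmap (A - B) = cmap A - cmap B :=
  Matrix.map_sub _ Complex.ofReal_sub A B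

lemma cmap_neg (A : Matrix m n ℝ) : cmap (-A) = -cmap A :=
  Matrix.map_neg _ Complex.ofReal_neg A

lemma cmap_mul [Fintype m] (A : Matrix l m ℝ) (B : Matrix m n ℝ) :
    cmap (A * B) = cmap A * cmap B :=
  Matrix.map_mul (f := Complex.ofRealHom)

lemma cmap_transpose (A : Matrix m n ℝ) : cmap Aᵀ = (cmap A)ᵀ := rfl

lemma conjTranspose_cmap (A : Matrix m n ℝ) : (cmap A)ᴴ = cmap Aᵀ := by
  ext i j
  simp [cmap]

lemma cmap_map_conj (A : Matrix m n ℝ) : (cmap A).map (starRingEnd ℂ) = cmap A := by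
  ext i j
  simp [cmap]

end cmap

lemma cmap_Theta (m : ℕ) : cmap (Theta ℝ m) = Theta ℂ m := by
  ext i j
  simp only [Theta, cmap, map_apply, of_apply]
  split_ifs <;> simp

lemma conjTranspose_Theta (m : ℕ) : (Theta ℂ m)ᴴ = (Theta ℂ m)ᵀ := by
  rw [← cmap_Theta]
  ext i j
  simp [cmap]

/-- `(s, c) ↦ c + h s` -/
abbrev blockEquiv (h : ℕ) : Fin 2 × Fin h ≃ Fin (2 * h) := finProdFinEquiv

/-- `(s, c) ↦ s + 2 c` -/
def interleaveEquiv (h : ℕ) : Fin 2 × Fin h ≃ Fin (2 * h) :=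
  (Equiv.prodComm _ _).trans (finProdFinEquiv.trans (finCongr (Nat.mul_comm h 2)))

@[simp] lemma interleaveEquiv_val {h : ℕ} (p : Fin 2 × Fin h) :
    (interleaveEquiv h p : ℕ) = p.1 + 2 * p.2 := rfl

def Jblock (R : Type*) [Ring R] : Matrix (Fin 2) (Fin 2) R := !![0, 1; -1, 0]

def Mblock : Matrix (Fin 2) (Fin 2) ℂ := !![1/2, Complex.I/2; 1/2, -Complex.I/2]

lemma Theta_eq_reindex (R : Type*) [Ring R] (h : ℕ) :
    Theta R (2 * h) = reindex (interleaveEquiv h) (interleaveEquiv h) (Jblock R ⊗ₖ 1) := by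
  rw [← Equiv.symm_apply_eq, reindex_symm, reindex_apply, Equiv.symm_symm]
  ext ⟨s, c⟩ ⟨t, d⟩
  fin_cases s <;> fin_cases t <;>
    simp [Theta, Jblock, kroneckerMap_apply, one_apply, Fin.ext_iff] <;>
    split_ifs <;> first | omega | rfl

lemma Theta_mul_Theta (R : Type*) [CommRing R] {m : ℕ} (hm : Even m) :
    Theta R m * Theta R m = -1 := by
  obtain ⟨h, rfl⟩ := hm.two_dvd
  have hJ : Jblock R * Jblock R = -1 := by
    ext i j
    fin_cases i <;> fin_cases j <;> simp [Jblock]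
  rw [Theta_eq_reindex, reindex_apply, submatrix_mul_equiv, ← mul_kronecker_mul, hJ,
    Matrix.mul_one, ← neg_one_smul R 1, smul_kronecker, one_kronecker_one, neg_one_smul]
  exact congrArg Neg.neg (submatrix_one_equiv _)

lemma Theta_mul_Theta_transpose (R : Type*) [CommRing R] {m : ℕ} (hm : Even m) :
    Theta R m * (Theta R m)ᵀ = 1 := by
  rw [Theta_transpose, Matrix.mul_neg, Theta_mul_Theta R hm, neg_neg]

lemma blockM_eq_reindex (h : ℕ) :
    blockM (2 * h) = reindex (interleaveEquiv h) (interleaveEquiv h) (Mblock ⊗ₖ 1) := by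
  rw [← Equiv.symm_apply_eq, reindex_symm, reindex_apply, Equiv.symm_symm]
  ext ⟨s, c⟩ ⟨t, d⟩
  fin_cases s <;> fin_cases t <;>
    simp [blockM, Mblock, kroneckerMap_apply, one_apply, Fin.ext_iff] <;>
    split_ifs <;> first | omega | rfl | ring

lemma Pmat_eq_reindex (h : ℕ) : Pmat (2 * h) = reindex (blockEquiv h) (interleaveEquiv h) 1 := by
  rw [← Equiv.symm_apply_eq, reindex_symm, reindex_apply, Equiv.symm_symm]
  ext ⟨s, c⟩ ⟨t, d⟩
  fin_cases s <;> fin_cases t <;>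
    simp [Pmat, one_apply, Fin.ext_iff] <;> (try split_ifs) <;> first | omega | rfl

lemma Gamma_eq_reindex (h : ℕ) :
    Gamma (2 * h) = reindex (blockEquiv h) (interleaveEquiv h) (Mblock ⊗ₖ 1) := by
  rw [Gamma, Pmat_eq_reindex, blockM_eq_reindex, reindex_apply, reindex_apply,
    submatrix_mul_equiv, Matrix.one_mul, reindex_apply]

lemma Mblock_mul_transpose : Mblock * Mblockᵀ = (1/2 : ℂ) • !![0, 1; 1, 0] := by
  ext i j
  fin_cases i <;> fin_cases j <;> norm_num [Mblock, mul_apply, Fin.sum_univ_two, Complex.ext_iff]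

lemma Mblock_mul_Jblock_mul_transpose :
    Mblock * Jblock ℂ * Mblockᵀ = -(Complex.I/2) • Jblock ℂ := by
  ext i j
  fin_cases i <;> fin_cases j <;>
    norm_num [Mblock, Jblock, mul_apply, Fin.sum_univ_two, Complex.ext_iff]

lemma Mblock_map_conj : Mblock.map (starRingEnd ℂ) = !![0, 1; 1, 0] * Mblock := by
  ext i j
  fin_cases i <;> fin_cases j <;> simp [Mblock, mul_apply, Fin.sum_univ_two, map_ofNat]

def blockRow {ι m n α : Type*} (X : ι → Matrix m n α) : Matrix m (ι × n) α :=
  of fun i p => X p.1 i p.2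

lemma blockRow_map {ι m n α β : Type*} (X : ι → Matrix m n α) (f : α → β) :
    (blockRow X).map f = blockRow fun s => (X s).map f := rfl

section blockRow
variable {ι κ m n p α : Type*} [Fintype ι] [Fintype n] [CommSemiring α]

lemma blockRow_mul_kronecker_one [DecidableEq n] (X : ι → Matrix m n α) (Q : Matrix ι κ α) :
    blockRow X * (Q ⊗ₖ (1 : Matrix n n α)) = blockRow fun t => ∑ s, Q s t • X s := by
  ext i ⟨t, d⟩
  simp [blockRow, mul_apply, Fintype.sum_prod_type, kroneckerMap_apply, one_apply,
    Matrix.sum_apply, mul_comm]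

lemma blockRow_mul_blockRow_transpose (X : ι → Matrix m n α) (Y : ι → Matrix p n α) :
    blockRow X * (blockRow Y)ᵀ = ∑ s, X s * (Y s)ᵀ := by
  ext i j
  simp [blockRow, mul_apply, Fintype.sum_prod_type, Matrix.sum_apply]

end blockRow

lemma blockRow_kronecker_sandwich {ι m n p α : Type*} [Fintype ι] [Fintype n] [DecidableEq n]
    [CommSemiring α] (X : ι → Matrix m n α) (S : Matrix ι ι α) (Y : ι → Matrix p n α) :
    blockRow X * (S ⊗ₖ (1 : Matrix n n α)) * (blockRow Y)ᵀ = ∑ s, ∑ t, S s t • (X s * (Y t)ᵀ) := by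
  rw [blockRow_mul_kronecker_one X S, blockRow_mul_blockRow_transpose]
  simp only [Matrix.sum_mul, Matrix.smul_mul]
  exact Finset.sum_comm

lemma blockRow_mul_kronecker_sandwich {κ m n α : Type*} [Fintype κ] [Fintype n] [DecidableEq n]
    [CommSemiring α] (X : κ → Matrix m n α) (M Q : Matrix κ κ α) :
    blockRow X * (M ⊗ₖ (1 : Matrix n n α)) * (Q ⊗ₖ (1 : Matrix n n α))
        * (blockRow X * (M ⊗ₖ (1 : Matrix n n α)))ᵀ
      = blockRow X * ((M * Q * Mᵀ) ⊗ₖ (1 : Matrix n n α)) * (blockRow X)ᵀ := by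
  have hk : (M * Q * Mᵀ) ⊗ₖ (1 : Matrix n n α) = (M ⊗ₖ 1) * (Q ⊗ₖ 1) * (Mᵀ ⊗ₖ 1) := by
    rw [← mul_kronecker_mul, ← mul_kronecker_mul, Matrix.mul_one, Matrix.mul_one]
  rw [hk, transpose_mul, ← kroneckerMap_transpose, transpose_one]
  simp only [Matrix.mul_assoc]

lemma reindex_mul_reindex_mul_reindex_transpose {m k k' α : Type*} [Fintype k] [Fintype k']
    [CommSemiring α] (V : Matrix m k α) (Q : Matrix k k α) (e : k ≃ k') :
    reindex (Equiv.refl m) e V * reindex e e Q * (reindex (Equiv.refl m) e V)ᵀ = V * Q * Vᵀ := by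
  simp only [reindex_apply, Equiv.refl_symm, Equiv.coe_refl, transpose_submatrix,
    submatrix_mul_equiv, submatrix_id_id]

lemma hconcat_eq_reindex {n h : ℕ} (X Y : Matrix (Fin n) (Fin h) ℂ) :
    hconcat X Y = reindex (Equiv.refl _) (blockEquiv h) (blockRow ![X, Y]) := by
  rw [← Equiv.symm_apply_eq, reindex_symm, reindex_apply, Equiv.symm_symm]
  ext i ⟨s, c⟩
  fin_cases s <;> simp [hconcat, blockRow]

section hconcatGamma
variable {n h : ℕ}

def interleavedFactor (Λ : Matrix (Fin h) (Fin n) ℂ) : Matrix (Fin n) (Fin 2 × Fin h) ℂ :=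
  blockRow ![-Λᴴ, Λᵀ] * (Mblock ⊗ₖ (1 : Matrix (Fin h) (Fin h) ℂ))

lemma hconcat_mul_Gamma (Λ : Matrix (Fin h) (Fin n) ℂ) :
    hconcat (-Λᴴ) Λᵀ * Gamma (2 * h)
      = reindex (Equiv.refl _) (interleaveEquiv h) (interleavedFactor Λ) := by
  rw [hconcat_eq_reindex, Gamma_eq_reindex]
  simp only [reindex_apply, Equiv.refl_symm, Equiv.coe_refl, submatrix_mul_equiv]
  rfl

lemma hconcat_mul_Gamma_sandwich (Λ : Matrix (Fin h) (Fin n) ℂ) (Q : Matrix (Fin 2) (Fin 2) ℂ) :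
    hconcat (-Λᴴ) Λᵀ * Gamma (2 * h)
        * reindex (interleaveEquiv h) (interleaveEquiv h) (Q ⊗ₖ (1 : Matrix (Fin h) (Fin h) ℂ))
        * (hconcat (-Λᴴ) Λᵀ * Gamma (2 * h))ᵀ
      = blockRow ![-Λᴴ, Λᵀ] * ((Mblock * Q * Mblockᵀ) ⊗ₖ (1 : Matrix (Fin h) (Fin h) ℂ))
          * (blockRow ![-Λᴴ, Λᵀ])ᵀ := by
  rw [hconcat_mul_Gamma, reindex_mul_reindex_mul_reindex_transpose, interleavedFactor,
    blockRow_mul_kronecker_sandwich]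

lemma hconcat_mul_Gamma_mul_transpose (Λ : Matrix (Fin h) (Fin n) ℂ) :
    hconcat (-Λᴴ) Λᵀ * Gamma (2 * h) * (hconcat (-Λᴴ) Λᵀ * Gamma (2 * h))ᵀ
      = -(1/2 : ℂ) • (Λᴴ * Λ + (Λᴴ * Λ)ᵀ) := by
  have := hconcat_mul_Gamma_sandwich Λ 1
  rw [one_kronecker_one, reindex_apply, submatrix_one_equiv, Matrix.mul_one, Matrix.mul_one,
    Mblock_mul_transpose, blockRow_kronecker_sandwich] at this
  rw [this]
  simp [Fin.sum_univ_two, transpose_mul]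

lemma hconcat_mul_Gamma_mul_Theta_mul_transpose (Λ : Matrix (Fin h) (Fin n) ℂ) :
    hconcat (-Λᴴ) Λᵀ * Gamma (2 * h) * Theta ℂ (2 * h) * (hconcat (-Λᴴ) Λᵀ * Gamma (2 * h))ᵀ
      = (Complex.I/2) • (Λᴴ * Λ - (Λᴴ * Λ)ᵀ) := by
  rw [Theta_eq_reindex, hconcat_mul_Gamma_sandwich, Mblock_mul_Jblock_mul_transpose,
    blockRow_kronecker_sandwich]
  simp only [Fin.sum_univ_two, Jblock, Matrix.smul_apply, of_apply, cons_val', cons_val_zero,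
    cons_val_one, cons_val_fin_one, Fin.isValue, transpose_neg, transpose_transpose, transpose_mul,
    Matrix.neg_mul, Matrix.mul_neg]
  module

/-- `conj M = σ M`, and `σ` turns the conjugate blocks `(−Λᵀ, Λ†)` of `L` into `−(−Λ†, Λᵀ)`. -/
lemma interleavedFactor_map_conj (Λ : Matrix (Fin h) (Fin n) ℂ) :
    (interleavedFactor Λ).map (starRingEnd ℂ) = -interleavedFactor Λ := by
  have hk : (Mblock ⊗ₖ (1 : Matrix (Fin h) (Fin h) ℂ)).map (starRingEnd ℂ)
      = (!![0, 1; 1, 0] ⊗ₖ (1 : Matrix (Fin h) (Fin h) ℂ)) * (Mblock ⊗ₖ 1) := by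
    rw [← mul_kronecker_mul, ← Mblock_map_conj, Matrix.one_mul]
    ext ⟨a, b⟩ ⟨c, d⟩
    by_cases hbd : b = d <;> simp [kroneckerMap_apply, one_apply, hbd]
  rw [interleavedFactor, Matrix.map_mul, hk, ← Matrix.mul_assoc, blockRow_map,
    blockRow_mul_kronecker_one, ← Matrix.neg_mul]
  congr 1
  ext i ⟨s, c⟩
  fin_cases s <;> simp [blockRow, Fin.sum_univ_two]

lemma hconcat_mul_Gamma_map_conj (Λ : Matrix (Fin h) (Fin n) ℂ) :
    (hconcat (-Λᴴ) Λᵀ * Gamma (2 * h)).map (starRingEnd ℂ)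
      = -(hconcat (-Λᴴ) Λᵀ * Gamma (2 * h)) := by
  rw [hconcat_mul_Gamma, reindex_apply, ← submatrix_map, interleavedFactor_map_conj]
  rfl

end hconcatGamma

section noiseGain
variable {ι : Type*} {n h : ℕ}

def noiseGain (A : Matrix ι (Fin n) ℂ) (Λ : Matrix (Fin h) (Fin n) ℂ) : Matrix ι (Fin (2 * h)) ℂ :=
  (2 * Complex.I) • (A * hconcat (-Λᴴ) Λᵀ * Gamma (2 * h))

lemma noiseGain_mul_mul_transpose (A : Matrix ι (Fin n) ℂ) (Λ : Matrix (Fin h) (Fin n) ℂ)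
    (Q : Matrix (Fin (2 * h)) (Fin (2 * h)) ℂ) :
    noiseGain A Λ * Q * (noiseGain A Λ)ᵀ
      = (-4 : ℂ) • (A * (hconcat (-Λᴴ) Λᵀ * Gamma (2 * h) * Q
          * (hconcat (-Λᴴ) Λᵀ * Gamma (2 * h))ᵀ) * Aᵀ) := by
  simp only [noiseGain, transpose_smul, transpose_mul, Matrix.smul_mul, Matrix.mul_smul, smul_smul,
    Matrix.mul_assoc]
  congr 1
  linear_combination (4 : ℂ) * Complex.I_mul_I

lemma noiseGain_mul_transpose (A : Matrix ι (Fin n) ℂ) (Λ : Matrix (Fin h) (Fin n) ℂ) :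
    noiseGain A Λ * (noiseGain A Λ)ᵀ = (2 : ℂ) • (A * (Λᴴ * Λ + (Λᴴ * Λ)ᵀ) * Aᵀ) := by
  have := noiseGain_mul_mul_transpose A Λ 1
  rw [Matrix.mul_one, Matrix.mul_one, hconcat_mul_Gamma_mul_transpose] at this
  rw [this, Matrix.mul_smul, Matrix.smul_mul, smul_smul]
  norm_num

lemma noiseGain_mul_Theta_mul_transpose (A : Matrix ι (Fin n) ℂ) (Λ : Matrix (Fin h) (Fin n) ℂ) :
    noiseGain A Λ * Theta ℂ (2 * h) * (noiseGain A Λ)ᵀ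
      = -(2 * Complex.I) • (A * (Λᴴ * Λ - (Λᴴ * Λ)ᵀ) * Aᵀ) := by
  rw [noiseGain_mul_mul_transpose, hconcat_mul_Gamma_mul_Theta_mul_transpose, Matrix.mul_smul,
    Matrix.smul_mul, smul_smul]
  congr 1
  ring

lemma noiseGain_map_conj (A : Matrix ι (Fin n) ℝ) (Λ : Matrix (Fin h) (Fin n) ℂ) :
    (noiseGain (cmap A) Λ).map (starRingEnd ℂ) = noiseGain (cmap A) Λ := by
  rw [noiseGain, Matrix.mul_assoc, Matrix.map_smulₛₗ _ (starRingEnd ℂ) _ (map_mul _ _),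
    Matrix.map_mul, cmap_map_conj, hconcat_mul_Gamma_map_conj]
  simp [Matrix.mul_neg, map_ofNat]

lemma noiseGain_im (A : Matrix ι (Fin n) ℝ) (Λ : Matrix (Fin h) (Fin n) ℂ) (i : ι)
    (j : Fin (2 * h)) :
    (noiseGain (cmap A) Λ i j).im = 0 :=
  Complex.conj_eq_iff_im.mp (congrFun (congrFun (noiseGain_map_conj A Λ) i) j)

end noiseGain

lemma noiseMatrix_eq {n yp wp : ℕ} (hn : Even n)
    (Ap : Matrix (Fin n) (Fin n) ℝ) (Cp : Matrix (Fin yp) (Fin n) ℝ)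
    (K : Matrix (Fin n) (Fin yp) ℝ) (Bp : Matrix (Fin n) (Fin wp) ℝ)
    (X : Matrix (Fin n) (Fin n) ℝ) :
      -(Complex.I / 4) • (Theta ℂ n * cmap (Ap - K * Cp))
      - (Complex.I / 4) • ((cmap (Ap - K * Cp))ᵀ * Theta ℂ n)
      + (Complex.I / 4) • (Theta ℂ n * cmap K * Theta ℂ yp * (cmap K)ᵀ * Theta ℂ n)
      - (1 / 4 : ℂ) • (Theta ℂ n * cmap K * cmap Cp * cmap X * Theta ℂ n)
      - (1 / 4 : ℂ) • (Theta ℂ n * (cmap X)ᵀ * (cmap K * cmap Cp)ᵀ * Theta ℂ n)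
      - (1 / 4 : ℂ) • (Theta ℂ n * cmap Bp * (cmap Bp)ᵀ * Theta ℂ n)
      + (1 / 4 : ℂ) • (Theta ℂ n * cmap K * (cmap K)ᵀ * Theta ℂ n)
    = (Theta ℂ n)ᵀ * ((1 / 4 : ℂ) • (cmap (K * Cp * X + Xᵀ * (K * Cp)ᵀ + Bp * Bpᵀ - K * Kᵀ)
        + Complex.I • cmap (-((Ap - K * Cp) * Theta ℝ n) - Theta ℝ n * (Ap - K * Cp)ᵀ
            - K * Theta ℝ yp * Kᵀ))) * Theta ℂ n := by
  have hΘΘ : ∀ M : Matrix (Fin n) (Fin n) ℂ, Theta ℂ n * (Theta ℂ n * M) = -M := fun M => by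
    rw [← Matrix.mul_assoc, Theta_mul_Theta ℂ hn, neg_one_mul]
  simp only [Theta_transpose, cmap_add, cmap_sub, cmap_neg, cmap_mul, cmap_transpose, cmap_Theta,
    transpose_mul, transpose_sub, Matrix.mul_add, Matrix.add_mul, Matrix.mul_sub, Matrix.sub_mul,
    Matrix.mul_neg, Matrix.neg_mul, Matrix.mul_smul, Matrix.smul_mul, Matrix.mul_assoc, hΘΘ,
    Theta_mul_Theta ℂ hn, Matrix.mul_one]
  module

lemma isHermitian_smul_cmap_add_I_smul_cmap {m : Type*} {R D : Matrix m m ℝ} (hR : Rᵀ = R)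
    (hD : Dᵀ = -D) :
    ((1 / 4 : ℂ) • (cmap R + Complex.I • cmap D)).IsHermitian := by
  simp only [IsHermitian, conjTranspose_smul, conjTranspose_add, conjTranspose_cmap, hR, hD,
    cmap_neg]
  simp [smul_neg]

section congruence
variable {m : Type*} [Fintype m] [DecidableEq m] {Θ H N : Matrix m m ℂ}

lemma mul_mul_transpose_of_eq_transpose_mul_mul (hΘ : Θ * Θᵀ = 1) (hN : N = Θᵀ * H * Θ) :
    Θ * N * Θᵀ = H := by
  rw [hN, ← Matrix.mul_assoc, ← Matrix.mul_assoc, hΘ, Matrix.one_mul, Matrix.mul_assoc, hΘ,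
    Matrix.mul_one]

lemma mul_transpose_mul_transpose_of_eq_transpose_mul_mul (hΘ : Θ * Θᵀ = 1)
    (hN : N = Θᵀ * H * Θ) : Θ * Nᵀ * Θᵀ = Hᵀ := by
  rw [← mul_mul_transpose_of_eq_transpose_mul_mul hΘ hN]
  simp only [transpose_mul, transpose_transpose, Matrix.mul_assoc]

variable {R D : Matrix m m ℝ}

lemma two_smul_mul_add_transpose_mul_transpose (hΘ : Θ * Θᵀ = 1) (hR : Rᵀ = R) (hD : Dᵀ = -D)
    (hN : N = Θᵀ * ((1 / 4 : ℂ) • (cmap R + Complex.I • cmap D)) * Θ) :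
    (2 : ℂ) • (Θ * (N + Nᵀ) * Θᵀ) = cmap R := by
  rw [Matrix.mul_add, Matrix.add_mul, mul_mul_transpose_of_eq_transpose_mul_mul hΘ hN,
    mul_transpose_mul_transpose_of_eq_transpose_mul_mul hΘ hN]
  simp only [transpose_smul, transpose_add, ← cmap_transpose, hR, hD, cmap_neg]
  module

lemma two_I_smul_mul_sub_transpose_mul_transpose (hΘ : Θ * Θᵀ = 1) (hR : Rᵀ = R)
    (hD : Dᵀ = -D) (hN : N = Θᵀ * ((1 / 4 : ℂ) • (cmap R + Complex.I • cmap D)) * Θ) :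
    -(2 * Complex.I) • (Θ * (N - Nᵀ) * Θᵀ) = cmap D := by
  rw [Matrix.mul_sub, Matrix.sub_mul, mul_mul_transpose_of_eq_transpose_mul_mul hΘ hN,
    mul_transpose_mul_transpose_of_eq_transpose_mul_mul hΘ hN]
  simp only [transpose_smul, transpose_add, ← cmap_transpose, hR, hD, cmap_neg]
  match_scalars
  · ring
  · linear_combination -Complex.I_mul_I

end congruence

open scoped MatrixOrder Matrix.Norms.L2Operator in
lemma posSemidef_iff_exists_conjTranspose_mul_self {𝕜 : Type*} [RCLike 𝕜] {n h : ℕ}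
    (hnh : n ≤ h) (N : Matrix (Fin n) (Fin n) 𝕜) :
    N.PosSemidef ↔ ∃ Λ : Matrix (Fin h) (Fin n) 𝕜, Λᴴ * Λ = N := by
  refine ⟨fun hN => ?_, fun ⟨Λ, hΛ⟩ => hΛ ▸ posSemidef_conjTranspose_mul_self Λ⟩
  obtain ⟨B, rfl⟩ := CStarAlgebra.nonneg_iff_eq_star_mul_self.mp hN.nonneg
  let e : Fin n ⊕ Fin (h - n) ≃ Fin h := finSumFinEquiv.trans (finCongr (by omega))
  refine ⟨reindex e (Equiv.refl _) (fromRows B 0), ?_⟩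
  rw [conjTranspose_reindex, reindex_apply, reindex_apply, submatrix_mul_equiv,
    conjTranspose_fromRows_eq_fromCols_conjTranspose, fromCols_mul_fromRows]
  simp [star_eq_conjTranspose]

theorem cmt_observer_noise_construction_general
    (n yp wp h : ℕ)
    (hn : Even n) (hwo : 2 * n ≤ 2 * h)
    (Ap : Matrix (Fin n) (Fin n) ℝ) (Cp : Matrix (Fin yp) (Fin n) ℝ)
    (K : Matrix (Fin n) (Fin yp) ℝ) (Bp : Matrix (Fin n) (Fin wp) ℝ)
    (X : Matrix (Fin n) (Fin n) ℝ)
    (N : Matrix (Fin n) (Fin n) ℂ)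
    (hN : N =
      -(Complex.I / 4) • (Theta ℂ n * cmap (Ap - K * Cp))
      - (Complex.I / 4) • ((cmap (Ap - K * Cp))ᵀ * Theta ℂ n)
      + (Complex.I / 4) • (Theta ℂ n * cmap K * Theta ℂ yp * (cmap K)ᵀ * Theta ℂ n)
      - (1 / 4 : ℂ) • (Theta ℂ n * cmap K * cmap Cp * cmap X * Theta ℂ n)
      - (1 / 4 : ℂ) • (Theta ℂ n * (cmap X)ᵀ * (cmap K * cmap Cp)ᵀ * Theta ℂ n)
      - (1 / 4 : ℂ) • (Theta ℂ n * cmap Bp * (cmap Bp)ᵀ * Theta ℂ n)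
      + (1 / 4 : ℂ) • (Theta ℂ n * cmap K * (cmap K)ᵀ * Theta ℂ n)) :
    N.IsHermitian ∧
    (N.PosSemidef ↔ ∃ Λ : Matrix (Fin h) (Fin n) ℂ, Λᴴ * Λ = N) ∧
    (∀ Λ : Matrix (Fin h) (Fin n) ℂ, Λᴴ * Λ = N →
      ∀ B : Matrix (Fin n) (Fin (2 * h)) ℂ,
        B = (2 * Complex.I) • (Theta ℂ n * hconcat (-Λᴴ) Λᵀ * Gamma (2 * h)) →
        (∀ i j, (B i j).im = 0) ∧
        B * Bᵀ = cmap (K * Cp * X + Xᵀ * (K * Cp)ᵀ + Bp * Bpᵀ - K * Kᵀ) ∧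
        B * Theta ℂ (2 * h) * Bᵀ =
          cmap (-((Ap - K * Cp) * Theta ℝ n) - Theta ℝ n * (Ap - K * Cp)ᵀ
            - K * Theta ℝ yp * Kᵀ)) := by
  rw [noiseMatrix_eq hn] at hN
  set R := K * Cp * X + Xᵀ * (K * Cp)ᵀ + Bp * Bpᵀ - K * Kᵀ
  set D := -((Ap - K * Cp) * Theta ℝ n) - Theta ℝ n * (Ap - K * Cp)ᵀ - K * Theta ℝ yp * Kᵀ
  have hR : Rᵀ = R := by
    simp only [R, transpose_add, transpose_sub, transpose_mul, transpose_transpose,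
      Matrix.mul_assoc]
    abel
  have hD : Dᵀ = -D := by
    simp only [D, transpose_neg, transpose_sub, transpose_mul, transpose_transpose,
      Theta_transpose, Matrix.mul_neg, Matrix.neg_mul, Matrix.mul_assoc]
    abel
  have hΘ : Theta ℂ n * (Theta ℂ n)ᵀ = 1 := Theta_mul_Theta_transpose ℂ hn
  refine ⟨?_, posSemidef_iff_exists_conjTranspose_mul_self (by omega) N, ?_⟩
  · rw [hN, ← conjTranspose_Theta]
    exact isHermitian_conjTranspose_mul_mul _ (isHermitian_smul_cmap_add_I_smul_cmap hR hD)
  rintro Λ hΛ B hB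
  obtain rfl : B = noiseGain (Theta ℂ n) Λ := hB
  refine ⟨fun i j => ?_, ?_, ?_⟩
  · rw [← cmap_Theta]
    exact noiseGain_im _ Λ i j
  · rw [noiseGain_mul_transpose, hΛ]
    exact two_smul_mul_add_transpose_mul_transpose hΘ hR hD hN
  · rw [noiseGain_mul_Theta_mul_transpose, hΛ]
    exact two_I_smul_mul_sub_transpose_mul_transpose hΘ hR hD hN

/-- Matrix-algebraic core of the paper's Theorem 2: the Hermitian matrix `N`
is positive semidefinite iff it factors as `Λ_o†·Λ_o`, and for any such `Λ_o` the matrix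
`B_o = 2i·Θ·[−Λ_o† Λ_oᵀ]·Γ_{w_o}` is real and simultaneously satisfies the
covariance-matching and physical-realizability equations. -/
theorem cmt_observer_noise_construction
    (n yp wp h : ℕ)
    (hn : Even n) (hn0 : 0 < n) (hyp : Even yp) (hyp0 : 0 < yp)
    (hwp : Even wp) (hwp0 : 0 < wp) (hh0 : 0 < h) (hwo : 2 * n ≤ 2 * h)
    (Ap : Matrix (Fin n) (Fin n) ℝ) (Cp : Matrix (Fin yp) (Fin n) ℝ)
    (K : Matrix (Fin n) (Fin yp) ℝ) (Bp : Matrix (Fin n) (Fin wp) ℝ)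
    (X : Matrix (Fin n) (Fin n) ℝ)
    (N : Matrix (Fin n) (Fin n) ℂ)
    (hN : N =
      -(Complex.I / 4) • (Theta ℂ n * cmap (Ap - K * Cp))
      - (Complex.I / 4) • ((cmap (Ap - K * Cp))ᵀ * Theta ℂ n)
      + (Complex.I / 4) • (Theta ℂ n * cmap K * Theta ℂ yp * (cmap K)ᵀ * Theta ℂ n)
      - (1 / 4 : ℂ) • (Theta ℂ n * cmap K * cmap Cp * cmap X * Theta ℂ n)
      - (1 / 4 : ℂ) • (Theta ℂ n * (cmap X)ᵀ * (cmap K * cmap Cp)ᵀ * Theta ℂ n)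
      - (1 / 4 : ℂ) • (Theta ℂ n * cmap Bp * (cmap Bp)ᵀ * Theta ℂ n)
      + (1 / 4 : ℂ) • (Theta ℂ n * cmap K * (cmap K)ᵀ * Theta ℂ n)) :
    N.IsHermitian ∧
    (N.PosSemidef ↔ ∃ Λ : Matrix (Fin h) (Fin n) ℂ, Λᴴ * Λ = N) ∧
    (∀ Λ : Matrix (Fin h) (Fin n) ℂ, Λᴴ * Λ = N →
      ∀ B : Matrix (Fin n) (Fin (2 * h)) ℂ,
        B = (2 * Complex.I) • (Theta ℂ n * hconcat (-Λᴴ) Λᵀ * Gamma (2 * h)) →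
        (∀ i j, (B i j).im = 0) ∧
        B * Bᵀ = cmap (K * Cp * X + Xᵀ * (K * Cp)ᵀ + Bp * Bpᵀ - K * Kᵀ) ∧
        B * Theta ℂ (2 * h) * Bᵀ =
          cmap (-((Ap - K * Cp) * Theta ℝ n) - Theta ℝ n * (Ap - K * Cp)ᵀ
            - K * Theta ℝ yp * Kᵀ)) :=
  cmt_observer_noise_construction_general n yp wp h hn hwo Ap Cp K Bp X N hN
end
end

section
/- Let n, y_p, w_p, w_o be positive even integers, let A_p (n×n), C_p (y_p×n), K (n×y_p), B_p (n×w_p), B_o (n×w_o) be real matrices, D_p = [I_{y_p} 0] (y_p×w_p), and set A = [[A_p, 0],[K·C_p, A_p − K·C_p]], B = [[B_p, 0],[K·D_p, B_o]]. Suppose the symmetric 2n×2n real matrix Σ = [[Σ_p, Σ_po],[Σ_poᵀ, Σ_o]] (with n×n blocks) satisfies the Lyapunov equation A·Σ + Σ·Aᵀ + B·Bᵀ = 0. Then X := Σ_p − Σ_po satisfies the Sylvester equation A_p·X + X·(A_p − K·C_p)ᵀ + B_p·B_pᵀ − B_p·D_pᵀ·Kᵀ = 0. -/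
/-! Because `A` is block lower triangular with `A₂₂ = A₁₁ - A₂₁`, the (1,1) and (1,2) blocks of
the Lyapunov equation only involve the first block row `(Σ_p, Σ_po)` of `Σ`, and subtracting
the (1,2) block from the (1,1) block gives exactly the Sylvester equation for `Σ_p - Σ_po`. -/

open Matrix

section LowerTriangularLyapunov

variable {R l m p q : Type*} [CommRing R] [Fintype l] [Fintype m] [Fintype p] [Fintype q]
  (A₁₁ : Matrix l l R) (A₂₁ : Matrix m l R) (A₂₂ : Matrix m m R)
  (S₁₁ : Matrix l l R) (S₁₂ : Matrix l m R) (S₂₁ : Matrix m l R) (S₂₂ : Matrix m m R)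
  (B₁₁ : Matrix l p R) (B₂₁ : Matrix m p R) (B₂₂ : Matrix m q R)

theorem toBlocks₁₁_lyapunov_fromBlocks_lowerTriangular :
    (fromBlocks A₁₁ 0 A₂₁ A₂₂ * fromBlocks S₁₁ S₁₂ S₂₁ S₂₂
        + fromBlocks S₁₁ S₁₂ S₂₁ S₂₂ * (fromBlocks A₁₁ 0 A₂₁ A₂₂)ᵀ
        + fromBlocks B₁₁ 0 B₂₁ B₂₂ * (fromBlocks B₁₁ 0 B₂₁ B₂₂)ᵀ).toBlocks₁₁
      = A₁₁ * S₁₁ + S₁₁ * A₁₁ᵀ + B₁₁ * B₁₁ᵀ := by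
  simp [fromBlocks_transpose, fromBlocks_multiply, fromBlocks_add]

theorem toBlocks₁₂_lyapunov_fromBlocks_lowerTriangular :
    (fromBlocks A₁₁ 0 A₂₁ A₂₂ * fromBlocks S₁₁ S₁₂ S₂₁ S₂₂
        + fromBlocks S₁₁ S₁₂ S₂₁ S₂₂ * (fromBlocks A₁₁ 0 A₂₁ A₂₂)ᵀ
        + fromBlocks B₁₁ 0 B₂₁ B₂₂ * (fromBlocks B₁₁ 0 B₂₁ B₂₂)ᵀ).toBlocks₁₂
      = A₁₁ * S₁₂ + S₁₁ * A₂₁ᵀ + S₁₂ * A₂₂ᵀ + B₁₁ * B₂₁ᵀ := by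
  simp [fromBlocks_transpose, fromBlocks_multiply, fromBlocks_add, add_assoc]

end LowerTriangularLyapunov

theorem sylvester_sub_of_lyapunov_fromBlocks_lowerTriangular
    {R n p q : Type*} [CommRing R] [Fintype n] [Fintype p] [Fintype q]
    {A₁₁ A₂₁ S₁₁ S₁₂ S₂₁ S₂₂ : Matrix n n R} {B₁₁ B₂₁ : Matrix n p R} {B₂₂ : Matrix n q R}
    (h : fromBlocks A₁₁ 0 A₂₁ (A₁₁ - A₂₁) * fromBlocks S₁₁ S₁₂ S₂₁ S₂₂
        + fromBlocks S₁₁ S₁₂ S₂₁ S₂₂ * (fromBlocks A₁₁ 0 A₂₁ (A₁₁ - A₂₁))ᵀ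
        + fromBlocks B₁₁ 0 B₂₁ B₂₂ * (fromBlocks B₁₁ 0 B₂₁ B₂₂)ᵀ = 0) :
    A₁₁ * (S₁₁ - S₁₂) + (S₁₁ - S₁₂) * (A₁₁ - A₂₁)ᵀ + B₁₁ * B₁₁ᵀ - B₁₁ * B₂₁ᵀ = 0 := by
  have h₁₁ : A₁₁ * S₁₁ + S₁₁ * A₁₁ᵀ + B₁₁ * B₁₁ᵀ = 0 := by
    rw [← toBlocks₁₁_lyapunov_fromBlocks_lowerTriangular _ _ (A₁₁ - A₂₁) _ S₁₂ S₂₁ S₂₂ _ B₂₁ B₂₂,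
      h]
    rfl
  have h₁₂ : A₁₁ * S₁₂ + S₁₁ * A₂₁ᵀ + S₁₂ * (A₁₁ - A₂₁)ᵀ + B₁₁ * B₂₁ᵀ = 0 := by
    rw [← toBlocks₁₂_lyapunov_fromBlocks_lowerTriangular _ _ _ _ _ S₂₁ S₂₂ _ _ B₂₂, h]
    rfl
  calc A₁₁ * (S₁₁ - S₁₂) + (S₁₁ - S₁₂) * (A₁₁ - A₂₁)ᵀ + B₁₁ * B₁₁ᵀ - B₁₁ * B₂₁ᵀ
      = (A₁₁ * S₁₁ + S₁₁ * A₁₁ᵀ + B₁₁ * B₁₁ᵀ)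
          - (A₁₁ * S₁₂ + S₁₁ * A₂₁ᵀ + S₁₂ * (A₁₁ - A₂₁)ᵀ + B₁₁ * B₂₁ᵀ) := by
        simp only [transpose_sub, Matrix.mul_sub, Matrix.sub_mul]; abel
    _ = 0 := by rw [h₁₁, h₁₂, sub_zero]

theorem sylvester_equation_for_Sigp_sub_Sigpo_general
    (n yp wp wo : ℕ)
    (Ap : Matrix (Fin n) (Fin n) ℝ) (Cp : Matrix (Fin yp) (Fin n) ℝ)
    (K : Matrix (Fin n) (Fin yp) ℝ) (Bp : Matrix (Fin n) (Fin wp) ℝ)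
    (Bo : Matrix (Fin n) (Fin wo) ℝ)
    (Dp : Matrix (Fin yp) (Fin wp) ℝ)
    (A : Matrix (Fin n ⊕ Fin n) (Fin n ⊕ Fin n) ℝ)
    (hA : A = Matrix.fromBlocks Ap 0 (K * Cp) (Ap - K * Cp))
    (B : Matrix (Fin n ⊕ Fin n) (Fin wp ⊕ Fin wo) ℝ)
    (hB : B = Matrix.fromBlocks Bp 0 (K * Dp) Bo)
    (Sigp Sigpo Sigo : Matrix (Fin n) (Fin n) ℝ)
    (Sig : Matrix (Fin n ⊕ Fin n) (Fin n ⊕ Fin n) ℝ)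
    (hSig : Sig = Matrix.fromBlocks Sigp Sigpo Sigpoᵀ Sigo)
    (hLyap : A * Sig + Sig * Aᵀ + B * Bᵀ = 0) :
    Ap * (Sigp - Sigpo) + (Sigp - Sigpo) * (Ap - K * Cp)ᵀ
      + Bp * Bpᵀ - Bp * Dpᵀ * Kᵀ = 0 := by
  subst hA hB hSig
  simpa only [transpose_mul, Matrix.mul_assoc]
    using sylvester_sub_of_lyapunov_fromBlocks_lowerTriangular hLyap

/-- The Sylvester equation (Eq. (22)) for `X = Σ_p − Σ_po` derived from the
joint plant–observer Lyapunov equation in steady state. -/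
theorem sylvester_equation_for_Sigp_sub_Sigpo
    (n yp wp wo : ℕ)
    (hn : Even n) (hn0 : 0 < n) (hyp : Even yp) (hyp0 : 0 < yp)
    (hwp : Even wp) (hwp0 : 0 < wp) (hwo : Even wo) (hwo0 : 0 < wo)
    (hypwp : yp ≤ wp)
    (Ap : Matrix (Fin n) (Fin n) ℝ) (Cp : Matrix (Fin yp) (Fin n) ℝ)
    (K : Matrix (Fin n) (Fin yp) ℝ) (Bp : Matrix (Fin n) (Fin wp) ℝ)
    (Bo : Matrix (Fin n) (Fin wo) ℝ)
    (Dp : Matrix (Fin yp) (Fin wp) ℝ)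
    (hDp : Dp = Matrix.of fun (i : Fin yp) (j : Fin wp) =>
      if (j : ℕ) = (i : ℕ) then (1 : ℝ) else 0)
    (A : Matrix (Fin n ⊕ Fin n) (Fin n ⊕ Fin n) ℝ)
    (hA : A = Matrix.fromBlocks Ap 0 (K * Cp) (Ap - K * Cp))
    (B : Matrix (Fin n ⊕ Fin n) (Fin wp ⊕ Fin wo) ℝ)
    (hB : B = Matrix.fromBlocks Bp 0 (K * Dp) Bo)
    (Sigp Sigpo Sigo : Matrix (Fin n) (Fin n) ℝ)
    (hSigp : Sigp.IsSymm) (hSigo : Sigo.IsSymm)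
    (Sig : Matrix (Fin n ⊕ Fin n) (Fin n ⊕ Fin n) ℝ)
    (hSig : Sig = Matrix.fromBlocks Sigp Sigpo Sigpoᵀ Sigo)
    (hLyap : A * Sig + Sig * Aᵀ + B * Bᵀ = 0) :
    Ap * (Sigp - Sigpo) + (Sigp - Sigpo) * (Ap - K * Cp)ᵀ
      + Bp * Bpᵀ - Bp * Dpᵀ * Kᵀ = 0 :=
  sylvester_equation_for_Sigp_sub_Sigpo_general n yp wp wo Ap Cp K Bp Bo Dp A hA B hB Sigp Sigpo
    Sigo Sig hSig hLyap
end

section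
/- Let A be an n×n real Hurwitz matrix and Q an n×n real matrix. For any initial condition Σ₀, the solution Σ(t) of the matrix differential equation Σ'(t) = A·Σ(t) + Σ(t)·Aᵀ + Q with Σ(0) = Σ₀ converges entrywise, as t → ∞, to X∞ := ∫₀^∞ exp(sA)·Q·exp(sAᵀ) ds, which is the unique solution of A·X + X·Aᵀ + Q = 0; in particular, the limit is independent of Σ₀. -/
open Matrix MeasureTheory Filter
open scoped Kronecker

noncomputable section

/-!
For Hurwitz `A`, every point of the spectrum of `exp A` is `exp μ` for an eigenvalue `μ` of `A`,
so the spectral radius of `exp A` is `< 1`; by Gelfand's formula some power of `exp A` is a strict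
contraction, and hence `‖exp (tA)‖` decays exponentially. Variation of constants writes the
solution as `Σ(t) = exp (tA) Σ₀ exp (tAᵀ) + ∫₀ᵗ exp (sA) Q exp (sAᵀ) ds`; the first term tends to
`0` and the second to `X∞`. Integrating `d/ds (exp (sA) Q exp (sAᵀ)) = A (⋯) + (⋯) Aᵀ` over
`(0, ∞)` gives the Lyapunov equation, and a solution `X` of that equation is a constant solution
of the differential equation, so it equals the limit `X∞`. Only the exponential decay of
`exp (ta)` and `exp (tb)` is used, so all of this holds for `x' = a x + x b + q` in any real
Banach algebra.
-/

open NormedSpace Topology Set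

section ExpStable

variable {𝔸 : Type*} [NormedRing 𝔸] [NormedAlgebra ℝ 𝔸]

def IsExpStable (a : 𝔸) : Prop :=
  ∃ C α : ℝ, 0 < α ∧ ∀ t : ℝ, 0 ≤ t → ‖exp (t • a)‖ ≤ C * Real.exp (-α * t)

omit [NormedAlgebra ℝ 𝔸] in
lemma norm_pow_mul_le (x y : 𝔸) (k : ℕ) : ‖x ^ k * y‖ ≤ ‖x‖ ^ k * ‖y‖ := by
  induction k with
  | zero => simp
  | succ k ih =>
    calc ‖x ^ (k + 1) * y‖ = ‖x * (x ^ k * y)‖ := by rw [pow_succ', mul_assoc]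
      _ ≤ ‖x‖ * (‖x‖ ^ k * ‖y‖) := norm_mul_le_of_le le_rfl ih
      _ = ‖x‖ ^ (k + 1) * ‖y‖ := by ring

variable {a b : 𝔸}

theorem IsExpStable.exists_norm_exp_mul_mul_exp_le (ha : IsExpStable a) (hb : IsExpStable b) :
    ∃ K γ : ℝ, 0 < γ ∧ ∀ t : ℝ, 0 ≤ t → ∀ x : 𝔸,
      ‖exp (t • a) * x * exp (t • b)‖ ≤ K * ‖x‖ * Real.exp (-γ * t) := by
  obtain ⟨C, α, hα, hCa⟩ := ha
  obtain ⟨D, β, hβ, hDb⟩ := hb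
  refine ⟨C * D, α + β, add_pos hα hβ, fun t ht x => ?_⟩
  have hC0 : 0 ≤ C * Real.exp (-α * t) := (norm_nonneg _).trans (hCa t ht)
  calc ‖exp (t • a) * x * exp (t • b)‖ ≤ ‖exp (t • a)‖ * ‖x‖ * ‖exp (t • b)‖ := norm_mul₃_le
    _ ≤ C * Real.exp (-α * t) * ‖x‖ * (D * Real.exp (-β * t)) := by
        gcongr
        exacts [hCa t ht, hDb t ht]
    _ = C * D * ‖x‖ * Real.exp (-(α + β) * t) := by
        rw [neg_add, add_mul, Real.exp_add]; ring

theorem IsExpStable.tendsto_exp_mul_mul_exp (ha : IsExpStable a) (hb : IsExpStable b) (x : 𝔸) :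
    Tendsto (fun t : ℝ => exp (t • a) * x * exp (t • b)) atTop (𝓝 0) := by
  obtain ⟨K, γ, hγ, hbound⟩ := ha.exists_norm_exp_mul_mul_exp_le hb
  refine squeeze_zero_norm' ((eventually_ge_atTop 0).mono fun t ht => hbound t ht x) ?_
  simpa using (Real.tendsto_exp_atBot.comp
    (tendsto_id.const_mul_atTop_of_neg (neg_lt_zero.2 hγ))).const_mul (K * ‖x‖)

variable [CompleteSpace 𝔸]

lemma continuous_exp_smul (a : 𝔸) : Continuous fun t : ℝ => exp (t • a) :=
  continuous_iff_continuousAt.2 fun t => (hasDerivAt_exp_smul_const a t).continuousAt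

theorem isExpStable_of_norm_exp_lt_one {a : 𝔸} {T : ℝ} (hT : 0 < T) (h : ‖exp (T • a)‖ < 1) :
    IsExpStable a := by
  let +nondep : NormedAlgebra ℚ 𝔸 := .restrictScalars ℚ ℝ 𝔸
  -- `θ` is kept away from `0` so that `log θ` is finite.
  set θ := max ‖exp (T • a)‖ 2⁻¹
  have hθ0 : 0 < θ := lt_max_of_lt_right (by norm_num)
  have hθ1 : θ < 1 := max_lt h (by norm_num)
  obtain ⟨M, hM⟩ := (isCompact_Icc (a := 0) (b := T)).exists_bound_of_continuousOn
    (continuous_exp_smul a).continuousOn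
  have hM0 : 0 ≤ M := (norm_nonneg _).trans (hM 0 ⟨le_rfl, hT.le⟩)
  refine ⟨M / θ, -Real.log θ / T, div_pos (neg_pos.2 (Real.log_neg hθ0 hθ1)) hT, fun t ht => ?_⟩
  set k := ⌊t / T⌋₊
  have hkt : (k : ℝ) * T ≤ t := (le_div_iff₀ hT).1 (Nat.floor_le (div_nonneg ht hT.le))
  have htk : t < (k + 1) * T := (div_lt_iff₀ hT).1 (Nat.lt_floor_add_one _)
  have hsplit : exp (t • a) = exp (T • a) ^ k * exp ((t - k * T) • a) := by
    rw [← NormedSpace.exp_nsmul, ← Nat.cast_smul_eq_nsmul ℝ, smul_smul,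
      ← NormedSpace.exp_add_of_commute ((Commute.refl a).smul_left _ |>.smul_right _), ← add_smul]
    congr 2; ring
  calc ‖exp (t • a)‖ ≤ ‖exp (T • a)‖ ^ k * ‖exp ((t - k * T) • a)‖ :=
        hsplit ▸ norm_pow_mul_le _ _ _
    _ ≤ θ ^ k * M := mul_le_mul (pow_le_pow_left₀ (norm_nonneg _) (le_max_left _ _) k)
        (hM _ ⟨by linarith, by linarith⟩) (norm_nonneg _) (by positivity)
    _ ≤ θ ^ (t / T - 1) * M := by
        rw [← Real.rpow_natCast]
        refine mul_le_mul_of_nonneg_right (Real.rpow_le_rpow_of_exponent_ge hθ0 hθ1.le ?_) hM0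
        rw [sub_le_iff_le_add, div_le_iff₀ hT]; linarith
    _ = M / θ * Real.exp (-(-Real.log θ / T) * t) := by
        rw [Real.rpow_sub hθ0, Real.rpow_one, Real.rpow_def_of_pos hθ0]
        field_simp

theorem IsExpStable.integrableOn_exp_mul_mul_exp (ha : IsExpStable a) (hb : IsExpStable b)
    (x : 𝔸) : IntegrableOn (fun t : ℝ => exp (t • a) * x * exp (t • b)) (Ioi 0) := by
  obtain ⟨K, γ, hγ, hbound⟩ := ha.exists_norm_exp_mul_mul_exp_le hb
  refine Integrable.mono' ((exp_neg_integrableOn_Ioi 0 hγ).const_mul (K * ‖x‖))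
    ((((continuous_exp_smul a).mul continuous_const).mul
      (continuous_exp_smul b)).aestronglyMeasurable) ?_
  filter_upwards [self_mem_ae_restrict measurableSet_Ioi] with t ht
  exact hbound t (le_of_lt ht) x

end ExpStable

section SylvesterODE

variable {𝔸 : Type*} [NormedRing 𝔸] [NormedAlgebra ℝ 𝔸] [CompleteSpace 𝔸] {a b : 𝔸}

lemma hasDerivAt_exp_smul_sub (a : 𝔸) (t u : ℝ) :
    HasDerivAt (fun u : ℝ => exp ((t - u) • a)) (-(exp ((t - u) • a) * a)) u := by
  simpa [Function.comp_def] using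
    (hasDerivAt_exp_smul_const a (t - u)).scomp u ((hasDerivAt_id u).const_sub t)

theorem sylvester_ode_variation_of_constants {q : 𝔸} {x : ℝ → 𝔸}
    (hx : ∀ t, HasDerivAt x (a * x t + x t * b + q) t) (t : ℝ) :
    x t = exp (t • a) * x 0 * exp (t • b) + ∫ s in 0..t, exp (s • a) * q * exp (s • b) := by
  have hderiv : ∀ u, HasDerivAt (fun u => exp ((t - u) • a) * x u * exp ((t - u) • b))
      (exp ((t - u) • a) * q * exp ((t - u) • b)) u := by
    intro u
    convert ((hasDerivAt_exp_smul_sub a t u).fun_mul (hx u)).fun_mul (hasDerivAt_exp_smul_sub b t u)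
      using 1
    rw [← ((Commute.refl b).smul_right (t - u)).exp_right.eq]
    noncomm_ring
  have hcont : Continuous fun s : ℝ => exp (s • a) * q * exp (s • b) :=
    ((continuous_exp_smul a).mul continuous_const).mul (continuous_exp_smul b)
  have hFTC := intervalIntegral.integral_eq_sub_of_hasDerivAt (fun u _ => hderiv u)
    ((hcont.comp (continuous_sub_left t)).intervalIntegrable 0 t)
  rw [intervalIntegral.integral_comp_sub_left (fun s => exp (s • a) * q * exp (s • b)) t]
    at hFTC
  simp only [sub_self, sub_zero, zero_smul, exp_zero, one_mul, mul_one] at hFTC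
  rw [hFTC, add_sub_cancel]

theorem tendsto_of_sylvester_ode (ha : IsExpStable a) (hb : IsExpStable b) {q : 𝔸}
    {x : ℝ → 𝔸} (hx : ∀ t, HasDerivAt x (a * x t + x t * b + q) t) :
    Tendsto x atTop (𝓝 (∫ s in Ioi (0 : ℝ), exp (s • a) * q * exp (s • b))) := by
  have h := (ha.tendsto_exp_mul_mul_exp hb (x 0)).add
    (intervalIntegral_tendsto_integral_Ioi 0 (ha.integrableOn_exp_mul_mul_exp hb q) tendsto_id)
  rw [zero_add] at h
  exact h.congr fun t => (sylvester_ode_variation_of_constants hx t).symm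

theorem sylvester_integral_eq_zero (ha : IsExpStable a) (hb : IsExpStable b) (q : 𝔸) :
    a * (∫ s in Ioi (0 : ℝ), exp (s • a) * q * exp (s • b))
      + (∫ s in Ioi (0 : ℝ), exp (s • a) * q * exp (s • b)) * b + q = 0 := by
  have hint := ha.integrableOn_exp_mul_mul_exp hb q
  have hderiv : ∀ s, HasDerivAt (fun s : ℝ => exp (s • a) * q * exp (s • b))
      (a * (exp (s • a) * q * exp (s • b)) + exp (s • a) * q * exp (s • b) * b) s := by
    intro s
    convert ((hasDerivAt_exp_smul_const' a s).mul_const q).fun_mul (hasDerivAt_exp_smul_const b s)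
      using 1
    noncomm_ring
  have hFTC := integral_Ioi_of_hasDerivAt_of_tendsto' (fun s _ => hderiv s)
    ((hint.const_mul a).add (hint.mul_const b)) (ha.tendsto_exp_mul_mul_exp hb q)
  rw [integral_add (hint.const_mul a) (hint.mul_const b), integral_const_mul_of_integrable hint,
    integral_mul_const_of_integrable hint] at hFTC
  simp only [zero_smul, exp_zero, one_mul, mul_one, zero_sub] at hFTC
  rw [hFTC, neg_add_cancel]

theorem eq_integral_of_sylvester_eq_zero (ha : IsExpStable a) (hb : IsExpStable b) {q X : 𝔸}
    (hX : a * X + X * b + q = 0) : X = ∫ s in Ioi (0 : ℝ), exp (s • a) * q * exp (s • b) :=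
  tendsto_nhds_unique tendsto_const_nhds
    (tendsto_of_sylvester_ode ha hb fun t => hX ▸ hasDerivAt_const t X)

end SylvesterODE

theorem exists_norm_pow_lt_one_of_spectralRadius_lt_one {A : Type*} [NormedRing A]
    [NormedAlgebra ℂ A] [CompleteSpace A] {a : A} (h : spectralRadius ℂ a < 1) :
    ∃ N : ℕ, 0 < N ∧ ‖a ^ N‖ < 1 := by
  obtain ⟨N, hN, hpos⟩ :=
    (((spectrum.pow_nnnorm_pow_one_div_tendsto_nhds_spectralRadius a).eventually
      (gt_mem_nhds h)).and (eventually_gt_atTop 0)).exists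
  refine ⟨N, hpos, ?_⟩
  have : (‖a ^ N‖₊ : ENNReal) < 1 := by
    by_contra! h1
    exact hN.not_ge (ENNReal.one_le_rpow h1 (by positivity))
  exact_mod_cast this

section MatrixExp

variable {m : Type*} [Fintype m] [DecidableEq m]

-- The Frobenius norm: submultiplicative, and invariant under transposition and `map ofReal`.
attribute [local instance] Matrix.frobeniusNormedRing Matrix.frobeniusNormedAlgebra

namespace Matrix

section Eigenvector

variable {R : Type*} [CommRing R] {B : Matrix m m R} {μ : R} {v : m → R}

theorem pow_mulVec_of_mulVec_eq_smul (h : B *ᵥ v = μ • v) (k : ℕ) : B ^ k *ᵥ v = μ ^ k • v := by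
  induction k with
  | zero => simp
  | succ k ih => rw [pow_succ, ← mulVec_mulVec, h, mulVec_smul, ih, smul_smul, pow_succ']

theorem aeval_mulVec_of_mulVec_eq_smul (h : B *ᵥ v = μ • v) (p : Polynomial R) :
    Polynomial.aeval B p *ᵥ v = p.eval μ • v := by
  simp only [Polynomial.aeval_eq_sum_range, Polynomial.eval_eq_sum_range, Finset.sum_smul,
    sum_mulVec, smul_mulVec, pow_mulVec_of_mulVec_eq_smul h, smul_smul]

end Eigenvector

theorem exp_mulVec_of_mulVec_eq_smul {B : Matrix m m ℂ} {μ : ℂ} {v : m → ℂ}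
    (h : B *ᵥ v = μ • v) : exp B *ᵥ v = Complex.exp μ • v := by
  have hB : HasSum (fun k : ℕ => ((k.factorial⁻¹ : ℂ) • B ^ k) *ᵥ v) (exp B *ᵥ v) :=
    (exp_series_hasSum_exp' (𝕂 := ℂ) B).map (mulVec.addMonoidHomLeft v)
      (continuous_id.matrix_mulVec continuous_const)
  have hμ := (exp_series_hasSum_exp' (𝕂 := ℂ) μ).smul_const v
  simp only [smul_mulVec, pow_mulVec_of_mulVec_eq_smul h, smul_smul] at hB
  rw [Complex.exp_eq_exp_ℂ]
  exact hB.unique hμ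

-- `exp B` is a polynomial `p(B)` since the algebra generated by `B` is closed; on an eigenvector
-- for `μ`, `p(B)` and `exp B` act by `p(μ)` and `exp μ`.
theorem spectrum_exp_subset [Nonempty m] (B : Matrix m m ℂ) :
    spectrum ℂ (exp B) ⊆ Complex.exp '' spectrum ℂ B := by
  intro z hz
  obtain ⟨p, hp⟩ : ∃ p : Polynomial ℂ, Polynomial.aeval B p = exp B := by
    rw [← AlgHom.mem_range, ← Algebra.adjoin_singleton_eq_range_aeval]
    have hclosed : IsClosed (Algebra.adjoin ℂ {B} : Set (Matrix m m ℂ)) :=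
      (Subalgebra.toSubmodule (Algebra.adjoin ℂ {B})).closed_of_finiteDimensional
    exact exp_mem (R := ℂ) hclosed (Algebra.self_mem_adjoin_singleton ℂ B)
  rw [← hp, spectrum.map_polynomial_aeval] at hz
  obtain ⟨μ, hμ, rfl⟩ := hz
  obtain ⟨v, hv⟩ := (Module.End.hasEigenvalue_iff_mem_spectrum.2
    ((spectrum_toLin' B).symm ▸ hμ)).exists_hasEigenvector
  have hBv : B *ᵥ v = μ • v := by rw [← toLin'_apply]; exact hv.apply_eq_smul
  refine ⟨μ, hμ, smul_left_injective ℂ hv.2 ?_⟩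
  dsimp only
  rw [← exp_mulVec_of_mulVec_eq_smul hBv, ← aeval_mulVec_of_mulVec_eq_smul hBv, hp]

theorem spectralRadius_exp_lt_one [Nonempty m] {B : Matrix m m ℂ}
    (hB : ∀ μ ∈ spectrum ℂ B, μ.re < 0) : spectralRadius ℂ (exp B) < 1 := by
  obtain ⟨z, hz, hrad⟩ := spectrum.exists_nnnorm_eq_spectralRadius (exp B)
  obtain ⟨μ, hμ, rfl⟩ := spectrum_exp_subset B hz
  rw [← hrad, ENNReal.coe_lt_one_iff, ← NNReal.coe_lt_one, coe_nnnorm, Complex.norm_exp,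
    Real.exp_lt_one_iff]
  exact hB μ hμ

theorem map_exp_ofReal (A : Matrix m m ℝ) :
    (exp A).map Complex.ofReal = exp (A.map Complex.ofReal) :=
  map_exp (Complex.ofRealHom.mapMatrix : Matrix m m ℝ →+* Matrix m m ℂ)
    (continuous_id.matrix_map Complex.continuous_ofReal) A

theorem hasDerivAt_of_hasDerivAt_apply {f : ℝ → Matrix m m ℝ} {f' : Matrix m m ℝ} {t : ℝ}
    (h : ∀ i j, HasDerivAt (fun s => f s i j) (f' i j) t) : HasDerivAt f f' t := by
  have hsum := HasDerivAt.fun_sum (u := Finset.univ) fun i _ =>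
    HasDerivAt.fun_sum (u := Finset.univ) fun j _ =>
    (h i j).smul_const (single i j (1 : ℝ))
  simp only [smul_single, smul_eq_mul, mul_one, ← matrix_eq_sum_single] at hsum
  exact hsum

end Matrix

theorem IsHurwitz.exists_norm_exp_pow_lt_one {A : Matrix m m ℝ} (hA : IsHurwitz A) :
    ∃ N : ℕ, 0 < N ∧ ‖exp A ^ N‖ < 1 := by
  rcases isEmpty_or_nonempty m with hm | hm
  · exact ⟨1, one_pos, by simp [Subsingleton.elim (exp A ^ 1) 0]⟩
  obtain ⟨N, hN, hlt⟩ := exists_norm_pow_lt_one_of_spectralRadius_lt_one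
    (Matrix.spectralRadius_exp_lt_one (B := A.map Complex.ofReal) hA)
  have hmap : (exp A ^ N).map Complex.ofReal = exp (A.map Complex.ofReal) ^ N := by
    rw [← Matrix.map_exp_ofReal]
    exact map_pow Complex.ofRealHom.mapMatrix (exp A) N
  refine ⟨N, hN, ?_⟩
  rwa [← hmap, frobenius_norm_map_eq _ _ Complex.norm_real] at hlt

theorem IsHurwitz.isExpStable {A : Matrix m m ℝ} (hA : IsHurwitz A) : IsExpStable A := by
  obtain ⟨N, hN, hlt⟩ := hA.exists_norm_exp_pow_lt_one
  refine isExpStable_of_norm_exp_lt_one (T := N) (Nat.cast_pos.2 hN) ?_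
  rwa [Nat.cast_smul_eq_nsmul, NormedSpace.exp_nsmul]

theorem IsExpStable.transpose {A : Matrix m m ℝ} (hA : IsExpStable A) :
    IsExpStable Aᵀ := by
  obtain ⟨C, α, hα, h⟩ := hA
  refine ⟨C, α, hα, fun t ht => ?_⟩
  have hT : exp (t • Aᵀ) = (exp (t • A))ᵀ := by rw [← transpose_smul, exp_transpose]
  calc ‖exp (t • Aᵀ)‖ = ‖(exp (t • A))ᵀ‖ := congrArg norm hT
    _ = ‖exp (t • A)‖ := frobenius_norm_transpose _
    _ ≤ C * Real.exp (-α * t) := h t ht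

end MatrixExp

theorem lyapunov_ode_convergence_general
    (n : ℕ) (A Q : Matrix (Fin n) (Fin n) ℝ) (hA : IsHurwitz A)
    (Xinf : Matrix (Fin n) (Fin n) ℝ)
    (hXinf : Xinf = Matrix.of fun i j => ∫ s in Set.Ioi (0 : ℝ),
      (NormedSpace.exp (s • A) * Q * NormedSpace.exp (s • Aᵀ)) i j)
    (S : ℝ → Matrix (Fin n) (Fin n) ℝ)
    (hS : ∀ t : ℝ, ∀ i j,
      HasDerivAt (fun s => S s i j) ((A * S t + S t * Aᵀ + Q) i j) t) :
    (∀ i j, Tendsto (fun t => S t i j) atTop (nhds (Xinf i j))) ∧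
    (A * Xinf + Xinf * Aᵀ + Q = 0) ∧
    (∀ X : Matrix (Fin n) (Fin n) ℝ, A * X + X * Aᵀ + Q = 0 → X = Xinf) := by
  let : NormedRing (Matrix (Fin n) (Fin n) ℝ) := Matrix.frobeniusNormedRing
  let : NormedAlgebra ℝ (Matrix (Fin n) (Fin n) ℝ) := Matrix.frobeniusNormedAlgebra
  have hAs : IsExpStable A := hA.isExpStable
  have hATs : IsExpStable Aᵀ := hAs.transpose
  obtain rfl : Xinf = ∫ s in Ioi (0 : ℝ), exp (s • A) * Q * exp (s • Aᵀ) := by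
    ext i j
    rw [hXinf, of_apply]
    exact (entryLinearMap ℝ ℝ i j).toContinuousLinearMap.integral_comp_comm
      (hAs.integrableOn_exp_mul_mul_exp hATs Q)
  refine ⟨fun i j => ?_, sylvester_integral_eq_zero hAs hATs Q,
    fun X hX => eq_integral_of_sylvester_eq_zero hAs hATs hX⟩
  exact ((continuous_id.matrix_elem i j).tendsto _).comp
    (tendsto_of_sylvester_ode hAs hATs fun t => Matrix.hasDerivAt_of_hasDerivAt_apply (hS t))

/-- For Hurwitz `A`, every solution of `Σ'(t) = A·Σ(t) + Σ(t)·Aᵀ + Q`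
converges entrywise to `X∞ = ∫₀^∞ exp(sA)·Q·exp(sAᵀ) ds`, the unique solution of
`A·X + X·Aᵀ + Q = 0`; in particular, the limit is independent of the initial condition. -/
theorem lyapunov_ode_convergence
    (n : ℕ) (A Q : Matrix (Fin n) (Fin n) ℝ) (hA : IsHurwitz A)
    (Xinf : Matrix (Fin n) (Fin n) ℝ)
    (hXinf : Xinf = Matrix.of fun i j => ∫ s in Set.Ioi (0 : ℝ),
      (NormedSpace.exp (s • A) * Q * NormedSpace.exp (s • Aᵀ)) i j)
    (Sig0 : Matrix (Fin n) (Fin n) ℝ)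
    (S : ℝ → Matrix (Fin n) (Fin n) ℝ) (hS0 : S 0 = Sig0)
    (hS : ∀ t : ℝ, ∀ i j,
      HasDerivAt (fun s => S s i j) ((A * S t + S t * Aᵀ + Q) i j) t) :
    (∀ i j, Tendsto (fun t => S t i j) atTop (nhds (Xinf i j))) ∧
    (A * Xinf + Xinf * Aᵀ + Q = 0) ∧
    (∀ X : Matrix (Fin n) (Fin n) ℝ, A * X + X * Aᵀ + Q = 0 → X = Xinf) :=
  lyapunov_ode_convergence_general n A Q hA Xinf hXinf S hS
end
end

section
/- Let n and m be positive even integers and let Λ be a complex (m/2)×n matrix. Then every entry of the n×m complex matrix B = 2i·Θ_n·[−Λ† Λᵀ]·Γ_m is real, where [−Λ† Λᵀ] denotes the n×m horizontal concatenation of −Λ† and Λᵀ. -/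
/-!
The rows `l + h` of `Γ` are the complex conjugates of its rows `l` (`P` sends them to the rows
`2l + 1` and `2l` of `I ⊗ M`, which are conjugate), while `[−Λ† Λᵀ]` pairs `−conj z` with `z`.
So every entry of `[−Λ† Λᵀ] Γ` is a sum of terms `w − conj w`, hence purely imaginary; `2i` times
it is real, and multiplying by the real matrix `Θ` keeps it real.
-/

open Matrix
open scoped Kronecker ComplexConjugate

noncomputable section

lemma Theta_im_eq_zero (n : ℕ) (i j : Fin n) : (Theta ℂ n i j).im = 0 := by
  simp only [Theta, Matrix.of_apply]
  split_ifs <;> simp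

lemma Matrix.im_mul_apply_eq_zero {l m n : Type*} [Fintype m]
    {A : Matrix l m ℂ} {B : Matrix m n ℂ}
    (hA : ∀ i k, (A i k).im = 0) (hB : ∀ k j, (B k j).im = 0) (i : l) (j : n) :
    ((A * B) i j).im = 0 := by
  simp [Matrix.mul_apply, Complex.im_sum, Complex.mul_im, hA, hB]

lemma hconcat_mul_apply {n h k : ℕ} (X Y : Matrix (Fin n) (Fin h) ℂ)
    (G : Matrix (Fin (2 * h)) (Fin k) ℂ) (r : Fin n) (j : Fin k) :
    (hconcat X Y * G) r j =
      ∑ l : Fin h, (X r l * G ⟨l, by omega⟩ j + Y r l * G ⟨l + h, by omega⟩ j) := by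
  rw [Matrix.mul_apply, ← (finCongr (two_mul h)).symm.sum_comp, Fin.sum_univ_add,
    ← Finset.sum_add_distrib]
  refine Finset.sum_congr rfl fun l _ => ?_
  simp only [hconcat, Matrix.of_apply, finCongr_symm, finCongr_apply, Fin.val_cast, Fin.val_castAdd, Fin.is_lt,
    ↓reduceDIte, Fin.eta, Fin.natAdd_eq_addNat, Fin.val_addNat, add_lt_iff_neg_right,
    not_lt_zero, add_tsub_cancel_right]
  rfl

lemma Pmat_mul_apply_of_lt {h : ℕ} {α : Type*} (A : Matrix (Fin (2 * h)) α ℂ)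
    (l : ℕ) (hl : l < h) (j : α) :
    (Pmat (2 * h) * A) ⟨l, by omega⟩ j = A ⟨2 * l, by omega⟩ j := by
  rw [Matrix.mul_apply, Finset.sum_eq_single ⟨2 * l, by omega⟩]
  · simp [Pmat, hl, not_le.mpr hl]
  · intro k _ hk
    simp only [Pmat, Matrix.of_apply]
    rw [if_neg, zero_mul]
    intro hc
    exact hk (Fin.ext (by dsimp only at hc ⊢; omega))
  · simp

lemma Pmat_mul_apply_add {h : ℕ} {α : Type*} (A : Matrix (Fin (2 * h)) α ℂ)
    (l : ℕ) (hl : l < h) (j : α) :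
    (Pmat (2 * h) * A) ⟨l + h, by omega⟩ j = A ⟨2 * l + 1, by omega⟩ j := by
  rw [Matrix.mul_apply, Finset.sum_eq_single ⟨2 * l + 1, by omega⟩]
  · simp only [Pmat, Matrix.of_apply]
    rw [if_pos (Or.inr ⟨by omega, by omega⟩), one_mul]
  · intro k _ hk
    simp only [Pmat, Matrix.of_apply]
    rw [if_neg, zero_mul]
    intro hc
    exact hk (Fin.ext (by dsimp only at hc ⊢; omega))
  · simp

lemma blockM_apply_odd_row {m : ℕ} (l : ℕ) (hl : 2 * l + 1 < m) (j : Fin m) :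
    blockM m ⟨2 * l + 1, hl⟩ j = conj (blockM m ⟨2 * l, by omega⟩ j) := by
  simp only [blockM, Matrix.of_apply]
  have hdiv : (2 * l + 1) / 2 = 2 * l / 2 := by omega
  rw [hdiv]
  split_ifs <;> first | omega | simp [map_ofNat, neg_div]

lemma Gamma_apply_add {h : ℕ} (l : ℕ) (hl : l < h) (j : Fin (2 * h)) :
    Gamma (2 * h) ⟨l + h, by omega⟩ j = conj (Gamma (2 * h) ⟨l, by omega⟩ j) := by
  rw [Gamma, Pmat_mul_apply_add _ l hl, Pmat_mul_apply_of_lt _ l hl, blockM_apply_odd_row]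

lemma re_hconcat_mul_Gamma_apply {n h : ℕ} (Λ : Matrix (Fin h) (Fin n) ℂ)
    (r : Fin n) (j : Fin (2 * h)) :
    ((hconcat (-Λᴴ) Λᵀ * Gamma (2 * h)) r j).re = 0 := by
  rw [hconcat_mul_apply, Complex.re_sum]
  refine Finset.sum_eq_zero fun l _ => ?_
  rw [Gamma_apply_add l l.isLt]
  simp [Complex.mul_re]

theorem B_entries_real_general
    (n h : ℕ)
    (Λ : Matrix (Fin h) (Fin n) ℂ)
    (B : Matrix (Fin n) (Fin (2 * h)) ℂ)
    (hB : B = (2 * Complex.I) • (Theta ℂ n * hconcat (-Λᴴ) Λᵀ * Gamma (2 * h))) :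
    ∀ i j, (B i j).im = 0 := by
  rw [hB, Matrix.mul_assoc, ← Matrix.mul_smul]
  refine Matrix.im_mul_apply_eq_zero (Theta_im_eq_zero n) fun k j => ?_
  simp [re_hconcat_mul_Gamma_apply]

/-- Every entry of `B = 2i·Θ_n·[−Λ† Λᵀ]·Γ_m` is real. -/
theorem B_entries_real
    (n h : ℕ) (hn : Even n) (hn0 : 0 < n) (hh0 : 0 < h)
    (Λ : Matrix (Fin h) (Fin n) ℂ)
    (B : Matrix (Fin n) (Fin (2 * h)) ℂ)
    (hB : B = (2 * Complex.I) • (Theta ℂ n * hconcat (-Λᴴ) Λᵀ * Gamma (2 * h))) :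
    ∀ i j, (B i j).im = 0 :=
  B_entries_real_general n h Λ B hB
end
end
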